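/- arXiv:2605.17383 — 4 statements merged into one kernel-verified Lean document; each statement's English description precedes it below -/
import Mathlib

section
/- If T is a tree with at least two vertices, then gap(T) = 0 if and only if T can be obtained from the path P_2 by repeatedly attaching a pendant path P_2 (a new path on two vertices joined by one edge to an existing vertex). -/
structure LoopGraph (V : Type*) where
  Adj : V → V → Prop
  symm : ∀ u v, Adj u v → Adj v u

namespace LoopGraph

variable {V : Type*} [Fintype V] [DecidableEq V]

/-- `C` is a set-join cover of `G`: a finite family of set-joins `K ∨ L`
(with `K`, `L` nonempty) whose edge sets union to `E(G)`. -/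
def IsCover (G : LoopGraph V) (C : Finset (Finset V × Finset V)) : Prop :=
  (∀ p ∈ C, p.1.Nonempty ∧ p.2.Nonempty) ∧
  (∀ u v : V, G.Adj u v ↔ ∃ p ∈ C, (u ∈ p.1 ∧ v ∈ p.2) ∨ (u ∈ p.2 ∧ v ∈ p.1))

/-- The component set of a set-join cover: all sets occurring as a part. -/
def sjComponents (C : Finset (Finset V × Finset V)) : Finset (Finset V) :=
  C.image Prod.fst ∪ C.image Prod.snd

/-- The SNT-rank: minimal number of distinct components over all set-join covers. -/
noncomputable def stp (G : LoopGraph V) : ℕ :=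
  sInf {n | ∃ C : Finset (Finset V × Finset V), G.IsCover C ∧ (sjComponents C).card = n}

/-- `gap G = |V(G)| - stp G`. -/
noncomputable def gap (G : LoopGraph V) : ℕ :=
  Fintype.card V - G.stp

/-- No vertices `u₁ ≠ u₂`, `v₁ ≠ v₂` with all four pairs `{uᵢ, vⱼ}` edges. -/
def StronglyC4Free (G : LoopGraph V) : Prop :=
  ¬ ∃ u₁ u₂ v₁ v₂ : V, u₁ ≠ u₂ ∧ v₁ ≠ v₂ ∧
    G.Adj u₁ v₁ ∧ G.Adj u₁ v₂ ∧ G.Adj u₂ v₁ ∧ G.Adj u₂ v₂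

/-- Induced subgraph on a finset of vertices. -/
def induce (G : LoopGraph V) (s : Finset V) : LoopGraph {x // x ∈ s} :=
  ⟨fun a b => G.Adj a b, fun _ _ h => G.symm _ _ h⟩

/-- Degree of a vertex; a loop counts twice. -/
noncomputable def deg (G : LoopGraph V) (x : V) : ℕ :=
  {y | G.Adj x y}.ncard + {y | y = x ∧ G.Adj x y}.ncard

end LoopGraph

open LoopGraph

/-- A loopless simple graph viewed as a graph with loops allowed. -/
def ofSimple {V : Type*} (T : SimpleGraph V) : LoopGraph V :=
  ⟨T.Adj, fun _ _ h => T.adj_symm h⟩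

/-- `T` is obtained from `P₂` by repeatedly attaching a pendant `P₂`:
there are pairs `(p i, q i)`, `i = 0, …, n`, partitioning the vertices, with the
edges being exactly `{p i, q i}` for each `i` together with, for each `i ≠ 0`,
an edge from `p i` to an attachment vertex `w i` belonging to an earlier pair. -/
def BuildableFromP2 {V : Type*} (T : SimpleGraph V) : Prop :=
  ∃ (n : ℕ) (p q w : Fin (n + 1) → V),
    (∀ z : V, ∃ i, z = p i ∨ z = q i) ∧
    (Function.Injective fun z : Fin (n + 1) × Bool => if z.2 then p z.1 else q z.1) ∧
    (∀ i : Fin (n + 1), i ≠ 0 → ∃ j : Fin (n + 1), j < i ∧ (w i = p j ∨ w i = q j)) ∧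
    (∀ a b : V, T.Adj a b ↔ ∃ i : Fin (n + 1),
      (a = p i ∧ b = q i) ∨ (b = p i ∧ a = q i) ∨
      (i ≠ 0 ∧ ((a = w i ∧ b = p i) ∨ (b = w i ∧ a = p i)))) 

set_option linter.unusedSectionVars false

section TreeAux

open SimpleGraph

variable {V : Type*} [DecidableEq V]



lemma tree_noC4 {T : SimpleGraph V} (hT : T.IsTree) {u1 u2 v1 v2 : V}
    (hu : u1 ≠ u2) (hv : v1 ≠ v2) (h11 : T.Adj u1 v1) (h12 : T.Adj u1 v2)
    (h21 : T.Adj u2 v1) (h22 : T.Adj u2 v2) : False := by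
  have hP1 : (Walk.cons h11 (Walk.cons h21.symm Walk.nil)).IsPath := by
    simp [Walk.cons_isPath_iff, h11.ne, h21.ne', hu]
  have hP2 : (Walk.cons h12 (Walk.cons h22.symm Walk.nil)).IsPath := by
    simp [Walk.cons_isPath_iff, h12.ne, h22.ne', hu]
  obtain ⟨p, -, hup⟩ := hT.existsUnique_path u1 u2
  have heq : (Walk.cons h11 (Walk.cons h21.symm Walk.nil)) =
      (Walk.cons h12 (Walk.cons h22.symm Walk.nil)) := (hup _ hP1).trans (hup _ hP2).symm
  have := congrArg Walk.support heq
  simp only [Walk.support_cons, Walk.support_nil] at this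
  exact hv (by injection this with _ h; injection h)



lemma walk_induce {T : SimpleGraph V} {s : Set V} :
    ∀ {u v : V} (p : T.Walk u v), (∀ z ∈ p.support, z ∈ s) →
      ∀ (hu : u ∈ s) (hv : v ∈ s), (T.induce s).Reachable ⟨u, hu⟩ ⟨v, hv⟩ := by
  intro u v p
  induction p with
  | nil => intro _ hu hv; exact Reachable.refl _
  | @cons a b c h p ih =>
    intro hs hu hv
    have hb : b ∈ s := hs _ (by simp)
    have h1 : (T.induce s).Adj ⟨a, hu⟩ ⟨b, hb⟩ := by
      simp only [comap_adj, Function.Embedding.coe_subtype]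
      exact h
    exact h1.reachable.trans (ih (fun z hz => hs z (by simp [hz])) hb hv)

lemma walk_comap {T : SimpleGraph V} {P : V → Prop} :
    ∀ {u v : V} (p : T.Walk u v), (∀ z ∈ p.support, P z) →
      ∀ (hu : P u) (hv : P v),
        (T.comap (Subtype.val : Subtype P → V)).Reachable ⟨u, hu⟩ ⟨v, hv⟩ := by
  intro u v p
  induction p with
  | nil => intro _ hu hv; exact Reachable.refl _
  | @cons a b c h p ih =>
    intro hs hu hv
    have hb : P b := hs _ (by simp)
    have h1 : (T.comap (Subtype.val : Subtype P → V)).Adj ⟨a, hu⟩ ⟨b, hb⟩ := h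
    exact h1.reachable.trans (ih (fun z hz => hs z (by simp [hz])) hb hv)

private lemma last_edge {T : SimpleGraph V} {u z : V} (q : T.Walk u z) (hne : u ≠ z) :
    ∃ a, T.Adj z a ∧ a ∈ q.support := by
  have hl : q.reverse.length ≠ 0 := by
    rw [Walk.length_reverse]
    intro h0
    exact hne (Walk.eq_of_length_eq_zero h0)
  cases hq : q.reverse with
  | nil => rw [hq] at hl; simp at hl
  | @cons _ b' _ h r =>
    refine ⟨b', h, ?_⟩
    have : b' ∈ q.reverse.support := by rw [hq]; simp
    rwa [Walk.support_reverse, List.mem_reverse] at this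

lemma interior_two_nbrs [DecidableEq V] {T : SimpleGraph V} {u v z : V} {p : T.Walk u v}
    (hp : p.IsPath) (hz : z ∈ p.support) (hzu : z ≠ u) (hzv : z ≠ v) :
    ∃ a b, a ≠ b ∧ T.Adj z a ∧ T.Adj z b ∧ a ∈ p.support ∧ b ∈ p.support := by
  have hsplit := p.take_spec hz
  have hdisj : ((p.takeUntil z hz).support).Disjoint ((p.dropUntil z hz).support.tail) := by
    have := hp.support_nodup
    rw [← hsplit, Walk.support_append] at this
    exact List.disjoint_of_nodup_append this
  obtain ⟨a, ha, haq⟩ := last_edge (p.takeUntil z hz) hzu.symm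
  obtain ⟨b, hb, hbq⟩ : ∃ b, T.Adj z b ∧ b ∈ (p.dropUntil z hz).support.tail := by
    cases hq : p.dropUntil z hz with
    | nil => exact absurd rfl hzv
    | cons h r => exact ⟨_, h, by simp⟩
  exact ⟨a, b, fun hab => hdisj haq (hab ▸ hbq), ha, hb,
    p.support_takeUntil_subset hz haq,
    p.support_dropUntil_subset hz (List.mem_of_mem_tail hbq)⟩



lemma exists_shortest_path {T : SimpleGraph V} (hc : T.Connected) (r v : V) :
    ∃ p : T.Walk r v, p.IsPath ∧ p.length = T.dist r v := by
  obtain ⟨p, hp⟩ := hc.exists_walk_length_eq_dist r v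
  refine ⟨p.bypass, p.bypass_isPath, le_antisymm ?_ (dist_le _)⟩
  exact le_trans p.length_bypass_le hp.le

lemma dist_support_le {T : SimpleGraph V} {r v z : V} (p : T.Walk r v) (hz : z ∈ p.support) :
    T.dist r z ≤ p.length :=
  le_trans (dist_le (p.takeUntil z hz)) (p.length_takeUntil_le hz)

lemma parent_exists {T : SimpleGraph V} (hc : T.Connected) {r v : V} (hv : v ≠ r) :
    ∃ u, T.Adj v u ∧ T.dist r u + 1 = T.dist r v := by
  obtain ⟨p, hp, hlen⟩ := exists_shortest_path hc r v
  have hl : p.reverse.length ≠ 0 := by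
    rw [Walk.length_reverse]; intro h0; exact hv (Walk.eq_of_length_eq_zero h0).symm
  cases hq : p.reverse with
  | nil => rw [hq] at hl; simp at hl
  | @cons _ b' _ h q =>
    have hlen2 : q.length + 1 = T.dist r v := by
      have := congrArg Walk.length hq
      rw [Walk.length_reverse, hlen] at this
      simp only [Walk.length_cons] at this
      omega
    have h1 : T.dist r b' ≤ q.length := by
      have := dist_le q.reverse
      rwa [Walk.length_reverse] at this
    have h2 : T.dist r v ≤ T.dist r b' + 1 := by
      obtain ⟨w, hw⟩ := hc.exists_walk_length_eq_dist r b'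
      have := dist_le (w.concat h.symm)
      rwa [Walk.length_concat, hw] at this
    exact ⟨b', h, by omega⟩

lemma adj_dist_step {T : SimpleGraph V} (hT : T.IsTree) (r : V) {u v : V} (h : T.Adj u v) :
    T.dist r v = T.dist r u + 1 ∨ T.dist r u = T.dist r v + 1 := by
  have hc := hT.isConnected
  -- general claim: if du ≤ dv then dv = du + 1
  have key : ∀ {a b : V}, T.Adj a b → T.dist r a ≤ T.dist r b → T.dist r b = T.dist r a + 1 := by
    intro a b hab hle
    have hub : T.dist r b ≤ T.dist r a + 1 := by
      obtain ⟨w, hw⟩ := hc.exists_walk_length_eq_dist r a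
      have := dist_le (w.concat hab)
      rwa [Walk.length_concat, hw] at this
    rcases Nat.lt_or_ge (T.dist r a) (T.dist r b) with hlt | hge
    · omega
    · -- dist equal; derive contradiction
      have heq : T.dist r a = T.dist r b := le_antisymm hle hge
      exfalso
      obtain ⟨p, hp, hlen⟩ := exists_shortest_path hc r a
      have hbns : b ∉ p.support := by
        intro hb
        have h1 : T.dist r b ≤ (p.takeUntil b hb).length := dist_le _
        have h2 : (p.takeUntil b hb).length ≤ p.length := p.length_takeUntil_le hb
        have h3 : (p.takeUntil b hb).length + (p.dropUntil b hb).length = p.length := by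
          have := congrArg Walk.length (p.take_spec hb)
          rwa [Walk.length_append] at this
        have : (p.dropUntil b hb).length = 0 := by omega
        exact hab.ne' (Walk.eq_of_length_eq_zero this)
      have hP' : (p.concat hab).IsPath := by
        rw [← Walk.isPath_reverse_iff, Walk.reverse_concat, Walk.cons_isPath_iff]
        exact ⟨hp.reverse, by rwa [Walk.support_reverse, List.mem_reverse]⟩
      obtain ⟨q, hq, hlenq⟩ := exists_shortest_path hc r b
      obtain ⟨pp, -, hup⟩ := hT.existsUnique_path r b
      have : p.concat hab = q := (hup _ hP').trans (hup _ hq).symm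
      have := congrArg Walk.length this
      rw [Walk.length_concat, hlen, hlenq] at this
      omega
  rcases le_or_gt (T.dist r u) (T.dist r v) with hle | hlt
  · exact Or.inl (key h hle)
  · exact Or.inr (key h.symm hlt.le)

lemma parent_unique {T : SimpleGraph V} (hT : T.IsTree) (r : V) {u1 u2 v : V}
    (h1 : T.Adj u1 v) (h2 : T.Adj u2 v)
    (d1 : T.dist r u1 + 1 = T.dist r v) (d2 : T.dist r u2 + 1 = T.dist r v) : u1 = u2 := by
  have hc := hT.isConnected
  have build : ∀ {u : V} (h : T.Adj u v), T.dist r u + 1 = T.dist r v →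
      ∃ p : T.Walk r u, p.IsPath ∧ ((p.concat h).IsPath) := by
    intro u h hd
    obtain ⟨p, hp, hlen⟩ := exists_shortest_path hc r u
    have hvns : v ∉ p.support := by
      intro hv
      have := dist_support_le p hv
      omega
    refine ⟨p, hp, ?_⟩
    rw [← Walk.isPath_reverse_iff, Walk.reverse_concat, Walk.cons_isPath_iff]
    exact ⟨hp.reverse, by rwa [Walk.support_reverse, List.mem_reverse]⟩
  obtain ⟨p1, hp1, hP1⟩ := build h1 d1
  obtain ⟨p2, hp2, hP2⟩ := build h2 d2
  obtain ⟨pp, -, hup⟩ := hT.existsUnique_path r v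
  have heq : p1.concat h1 = p2.concat h2 := (hup _ hP1).trans (hup _ hP2).symm
  have hs := congrArg Walk.support heq
  rw [Walk.support_concat, Walk.support_concat] at hs
  have hs' : p1.support = p2.support := by
    exact List.append_cancel_right hs
  have e1 : p1.support.getLast? = some u1 := by
    rw [List.getLast?_eq_getLast (l := p1.support) (by simp), p1.getLast_support]
  have e2 : p2.support.getLast? = some u2 := by
    rw [List.getLast?_eq_getLast (l := p2.support) (by simp), p2.getLast_support]
  rw [hs', e2] at e1
  exact (Option.some_injective _ e1).symm

lemma exists_pendant [Fintype V] {T : SimpleGraph V} (hT : T.IsTree)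
    (h3 : 3 ≤ Fintype.card V) :
    ∃ x y, T.Adj x y ∧ (∀ z, T.Adj y z → z = x) ∧
      ((∃ y', y' ≠ y ∧ T.Adj x y' ∧ (∀ z, T.Adj y' z → z = x)) ∨
       (∃ w, w ≠ y ∧ T.Adj x w ∧ ∀ z, T.Adj x z → z = y ∨ z = w)) := by
  have hc := hT.isConnected
  have hne : Nonempty V := hc.nonempty
  obtain ⟨r⟩ := hne
  obtain ⟨y, -, hy⟩ := Finset.exists_max_image Finset.univ (fun v => T.dist r v)
    ⟨r, Finset.mem_univ r⟩
  have hy' : ∀ v, T.dist r v ≤ T.dist r y := fun v => hy v (Finset.mem_univ v)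
  have hyr : y ≠ r := by
    obtain ⟨v, hv⟩ : ∃ v : V, v ≠ r := by
      obtain ⟨a, b, hab⟩ := Fintype.exists_pair_of_one_lt_card (α := V) (by omega)
      rcases eq_or_ne a r with rfl | h
      · exact ⟨b, hab.symm⟩
      · exact ⟨a, h⟩
    intro h
    have h1 : T.dist r v ≠ 0 := fun h0 => hv ((hc.dist_eq_zero_iff).mp h0).symm
    have h2 : T.dist r y = 0 := by rw [h]; exact (hc.dist_eq_zero_iff).mpr rfl
    have := hy' v
    omega
  obtain ⟨x, hxy, hxd⟩ := parent_exists hc hyr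
  set d := T.dist r y with hd
  have hd1 : 1 ≤ d :=
    Nat.pos_of_ne_zero fun h0 => hyr ((hc.dist_eq_zero_iff).mp h0).symm
  -- y is a leaf
  have hleafy : ∀ z, T.Adj y z → z = x := by
    intro z hz
    rcases adj_dist_step hT r hz with h | h
    · have := hy' z; omega
    · exact parent_unique hT r hz.symm hxy.symm (by omega) hxd
  -- any depth-d neighbor of x is a leaf
  have hleafd : ∀ z, T.Adj x z → T.dist r z = d → (∀ z', T.Adj z z' → z' = x) := by
    intro z hxz hdz z' hzz'
    rcases adj_dist_step hT r hzz' with h | h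
    · have := hy' z'; omega
    · exact parent_unique hT r hzz'.symm hxz (by omega) (by omega)
  by_cases hA : ∃ y', y' ≠ y ∧ T.Adj x y' ∧ T.dist r y' = d
  · obtain ⟨y', hy'y, hxy'', hdy'⟩ := hA
    exact ⟨x, y, hxy.symm, hleafy, Or.inl ⟨y', hy'y, hxy'', hleafd y' hxy'' hdy'⟩⟩
  · push_neg at hA
    rcases eq_or_ne x r with hxr | hxr
    · -- x = r: d = 1; find a third vertex, contradiction
      exfalso
      have hdx : T.dist r x = 0 := by rw [hxr]; exact (hc.dist_eq_zero_iff).mpr rfl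
      have hd1' : d = 1 := by omega
      obtain ⟨z, hzx, hzy⟩ : ∃ z : V, z ≠ x ∧ z ≠ y := by
        have hcard : 1 ≤ ((Finset.univ.erase x).erase y).card := by
          have h1 := Finset.card_erase_le (a := y) (s := Finset.univ.erase x)
          have h2 : (Finset.univ.erase x).card = Fintype.card V - 1 := by
            rw [Finset.card_erase_of_mem (Finset.mem_univ x), Finset.card_univ]
          have h3 : Fintype.card V - 2 ≤ ((Finset.univ.erase x).erase y).card := by
            have := Finset.pred_card_le_card_erase (a := y) (s := Finset.univ.erase x)
            omega
          omega
        obtain ⟨z, hz⟩ := Finset.card_pos.mp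
          (show 0 < ((Finset.univ.erase x).erase y).card by omega)
        simp only [Finset.mem_erase, Finset.mem_univ, and_true] at hz
        exact ⟨z, hz.2, hz.1⟩
      have hz1 : T.dist r z = 1 := by
        have hub := hy' z
        have : T.dist r z ≠ 0 := fun h0 => hzx (((hc.dist_eq_zero_iff).mp h0).symm.trans hxr.symm)
        omega
      exact hA z hzy (hxr ▸ dist_eq_one_iff_adj.mp hz1) (by omega)
    · obtain ⟨w, hxw, hwd⟩ := parent_exists hc hxr
      have hdx0 : T.dist r x ≠ 0 := fun h0 => hxr ((hc.dist_eq_zero_iff).mp h0).symm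
      have hwy : w ≠ y := by
        intro h; rw [h] at hwd; omega
      refine ⟨x, y, hxy.symm, hleafy, Or.inr ⟨w, hwy, hxw, ?_⟩⟩
      intro z hxz
      rcases adj_dist_step hT r hxz with h | h
      · by_contra hcon
        push_neg at hcon
        exact hA z hcon.1 hxz (by omega)
      · exact Or.inr (parent_unique hT r hxz.symm hxw.symm (by omega) (by omega))

end TreeAux

section CoverAux

variable {V : Type*} [Fintype V] [DecidableEq V] {T : SimpleGraph V}

lemma cover_adj {C : Finset (Finset V × Finset V)} (hC : (ofSimple T).IsCover C)
    {p : Finset V × Finset V} (hp : p ∈ C) {a b : V}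
    (ha : a ∈ p.1) (hb : b ∈ p.2) : T.Adj a b :=
  ((hC.2 a b).mpr ⟨p, hp, Or.inl ⟨ha, hb⟩⟩ : (ofSimple T).Adj a b)

lemma components_ge (hT : T.IsTree) {f : V → V} (hf : ∀ v, T.Adj v (f v))
    (hinv : ∀ v, f (f v) = v) {C : Finset (Finset V × Finset V)}
    (hC : (ofSimple T).IsCover C) :
    Fintype.card V ≤ (sjComponents C).card := by
  have hch : ∀ v : V, ∃ A B : Finset V,
      (∃ p ∈ C, (p.1 = A ∧ p.2 = B) ∨ (p.2 = A ∧ p.1 = B)) ∧ v ∈ A ∧ f v ∈ B := by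
    intro v
    obtain ⟨p, hp, h⟩ := (hC.2 v (f v)).mp (hf v)
    rcases h with ⟨h1, h2⟩ | ⟨h1, h2⟩
    · exact ⟨p.1, p.2, ⟨p, hp, Or.inl ⟨rfl, rfl⟩⟩, h1, h2⟩
    · exact ⟨p.2, p.1, ⟨p, hp, Or.inr ⟨rfl, rfl⟩⟩, h1, h2⟩
  choose A B hP hvA hvB using hch
  have hmem : ∀ v, A v ∈ sjComponents C := by
    intro v
    obtain ⟨p, hp, h⟩ := hP v
    rcases h with ⟨h1, -⟩ | ⟨h1, -⟩
    · exact Finset.mem_union_left _ (Finset.mem_image.mpr ⟨p, hp, h1⟩)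
    · exact Finset.mem_union_right _ (Finset.mem_image.mpr ⟨p, hp, h1⟩)
  have hcross : ∀ v a b, a ∈ A v → b ∈ B v → T.Adj a b := by
    intro v a b ha hb
    obtain ⟨p, hp, h⟩ := hP v
    rcases h with ⟨h1, h2⟩ | ⟨h1, h2⟩
    · exact cover_adj hC hp (h1 ▸ ha) (h2 ▸ hb)
    · exact (cover_adj hC hp (h2 ▸ hb) (h1 ▸ ha)).symm
  rw [← Finset.card_univ]
  refine Finset.card_le_card_of_injOn A (fun v _ => hmem v) ?_
  intro a _ b _ hab
  by_contra hne
  have hba : b ∈ A a := by rw [hab]; exact hvA b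
  have hfab : f a ≠ f b := by
    intro h
    exact hne (((hinv a).symm.trans (by rw [h])).trans (hinv b))
  exact tree_noC4 hT hne hfab (hcross a a (f a) (hvA a) (hvB a))
    (hcross b a (f b) (hab ▸ hvA a) (hvB b))
    (hcross a b (f a) hba (hvB a))
    (hcross b b (f b) (hvA b) (hvB b))

lemma buildable_matching (hB : BuildableFromP2 T) :
    ∃ f : V → V, (∀ v, T.Adj v (f v)) ∧ (∀ v, f (f v) = v) := by
  obtain ⟨n, p, q, w, hsurj, hinj, -, hadj⟩ := hB
  have hpq : ∀ i j, p i ≠ q j := by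
    intro i j h
    have := hinj (a₁ := (i, true)) (a₂ := (j, false)) (by simpa using h)
    simp at this
  have hpp : ∀ i j, p i = p j → i = j := by
    intro i j h
    have := hinj (a₁ := (i, true)) (a₂ := (j, true)) (by simpa using h)
    simpa using this
  have hqq : ∀ i j, q i = q j → i = j := by
    intro i j h
    have := hinj (a₁ := (i, false)) (a₂ := (j, false)) (by simpa using h)
    simpa using this
  have hadjpq : ∀ i, T.Adj (p i) (q i) := by
    intro i
    exact (hadj (p i) (q i)).mpr ⟨i, Or.inl ⟨rfl, rfl⟩⟩
  have hch : ∀ z : V, ∃ m : V, T.Adj z m ∧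
      ∃ i, (z = p i ∧ m = q i) ∨ (z = q i ∧ m = p i) := by
    intro z
    obtain ⟨i, hi | hi⟩ := hsurj z
    · exact ⟨q i, hi ▸ hadjpq i, i, Or.inl ⟨hi, rfl⟩⟩
    · exact ⟨p i, hi ▸ (hadjpq i).symm, i, Or.inr ⟨hi, rfl⟩⟩
  choose f hfadj hfpair using hch
  refine ⟨f, hfadj, ?_⟩
  intro z
  obtain ⟨i, hi⟩ := hfpair z
  obtain ⟨j, hj⟩ := hfpair (f z)
  rcases hi with ⟨hz, hfz⟩ | ⟨hz, hfz⟩ <;> rcases hj with ⟨hz2, hfz2⟩ | ⟨hz2, hfz2⟩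
  · exact absurd (hz2.symm.trans hfz).symm (fun h => hpq j i h.symm)
  · have hij : i = j := hqq i j (hfz.symm.trans hz2)
    rw [hfz2, hz, hij]
  · have hij : i = j := hpp i j (hfz.symm.trans hz2)
    rw [hfz2, hz, hij]
  · exact absurd (hfz.symm.trans hz2) (hpq i j)

lemma exists_cover (T : SimpleGraph V) :
    ∃ C, (ofSimple T).IsCover C ∧ (sjComponents C).card ≤ Fintype.card V := by
  classical
  refine ⟨(Finset.univ.filter fun e : V × V => T.Adj e.1 e.2).image
      fun e => (({e.1} : Finset V), ({e.2} : Finset V)), ?_⟩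
  have hmemC : ∀ pr : Finset V × Finset V,
      pr ∈ (Finset.univ.filter fun e : V × V => T.Adj e.1 e.2).image
        (fun e => (({e.1} : Finset V), ({e.2} : Finset V))) ↔
      ∃ e : V × V, T.Adj e.1 e.2 ∧ pr = ({e.1}, {e.2}) := by
    intro pr
    simp only [Finset.mem_image, Finset.mem_filter, Finset.mem_univ, true_and]
    constructor
    · rintro ⟨e, he, rfl⟩; exact ⟨e, he, rfl⟩
    · rintro ⟨e, he, rfl⟩; exact ⟨e, he, rfl⟩
  refine ⟨⟨?_, ?_⟩, ?_⟩
  · intro pr hpr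
    obtain ⟨e, -, rfl⟩ := (hmemC pr).mp hpr
    exact ⟨⟨e.1, Finset.mem_singleton_self _⟩, ⟨e.2, Finset.mem_singleton_self _⟩⟩
  · intro u v
    constructor
    · intro h
      exact ⟨({u}, {v}), (hmemC _).mpr ⟨(u, v), h, rfl⟩,
        Or.inl ⟨Finset.mem_singleton_self _, Finset.mem_singleton_self _⟩⟩
    · rintro ⟨pr, hpr, h⟩
      obtain ⟨e, he, rfl⟩ := (hmemC pr).mp hpr
      rcases h with ⟨h1, h2⟩ | ⟨h1, h2⟩ <;>
        simp only [Finset.mem_singleton] at h1 h2 <;> subst h1 <;> subst h2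
      · exact he
      · exact (he.symm : (ofSimple T).Adj _ _)
  · have hsub : sjComponents ((Finset.univ.filter fun e : V × V => T.Adj e.1 e.2).image
        fun e => (({e.1} : Finset V), ({e.2} : Finset V))) ⊆
        Finset.univ.image fun v : V => ({v} : Finset V) := by
      intro s hs
      simp only [sjComponents, Finset.mem_union] at hs
      rcases hs with hs | hs <;>
        · obtain ⟨pr, hpr, rfl⟩ := Finset.mem_image.mp hs
          obtain ⟨e, -, rfl⟩ := (hmemC pr).mp hpr
          exact Finset.mem_image.mpr ⟨_, Finset.mem_univ _, rfl⟩
    exact le_trans (Finset.card_le_card hsub) (le_trans Finset.card_image_le (by simp))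

end CoverAux

lemma cover_lift {V : Type*} [DecidableEq V] {T : SimpleGraph V} {s : Finset V} (x y w : V)
    (hxy : T.Adj x y) (hxw : T.Adj x w)
    (hclass : ∀ a b : V, T.Adj a b →
      (a ∈ s ∧ b ∈ s) ∨ (a = x ∧ b = y) ∨ (a = y ∧ b = x) ∨ (a = x ∧ b = w) ∨ (a = w ∧ b = x))
    {C' : Finset (Finset {z // z ∈ s} × Finset {z // z ∈ s})}
    (hC' : (ofSimple (T.comap (Subtype.val : {z // z ∈ s} → V))).IsCover C') :
    ∃ C, (ofSimple T).IsCover C ∧ (sjComponents C).card ≤ (sjComponents C').card + 2 := by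
  classical
  set lift : Finset {z // z ∈ s} → Finset V := Finset.image Subtype.val with hliftdef
  refine ⟨insert (({x} : Finset V), ({y, w} : Finset V))
    (C'.image fun pr => (lift pr.1, lift pr.2)), ⟨?_, ?_⟩, ?_⟩
  · intro pr hpr
    rcases Finset.mem_insert.mp hpr with rfl | hpr
    · exact ⟨⟨x, Finset.mem_singleton_self _⟩, ⟨y, Finset.mem_insert_self _ _⟩⟩
    · obtain ⟨pr', hpr', rfl⟩ := Finset.mem_image.mp hpr
      obtain ⟨h1, h2⟩ := hC'.1 pr' hpr'
      exact ⟨h1.image _, h2.image _⟩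
  · intro u v
    constructor
    · intro h
      have h' : T.Adj u v := h
      rcases hclass u v h' with ⟨h1, h2⟩ | ⟨rfl, rfl⟩ | ⟨rfl, rfl⟩ | ⟨rfl, rfl⟩ | ⟨rfl, rfl⟩
      · obtain ⟨pr', hpr', hmem⟩ := (hC'.2 ⟨u, h1⟩ ⟨v, h2⟩).mp h'
        refine ⟨(lift pr'.1, lift pr'.2),
          Finset.mem_insert_of_mem (Finset.mem_image.mpr ⟨pr', hpr', rfl⟩), ?_⟩
        rcases hmem with ⟨ha, hb⟩ | ⟨ha, hb⟩
        · exact Or.inl ⟨Finset.mem_image.mpr ⟨_, ha, rfl⟩, Finset.mem_image.mpr ⟨_, hb, rfl⟩⟩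
        · exact Or.inr ⟨Finset.mem_image.mpr ⟨_, ha, rfl⟩, Finset.mem_image.mpr ⟨_, hb, rfl⟩⟩
      · exact ⟨_, Finset.mem_insert_self _ _,
          Or.inl ⟨Finset.mem_singleton_self _, Finset.mem_insert_self _ _⟩⟩
      · exact ⟨_, Finset.mem_insert_self _ _,
          Or.inr ⟨Finset.mem_insert_self _ _, Finset.mem_singleton_self _⟩⟩
      · exact ⟨_, Finset.mem_insert_self _ _,
          Or.inl ⟨Finset.mem_singleton_self _,
            Finset.mem_insert_of_mem (Finset.mem_singleton_self _)⟩⟩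
      · exact ⟨_, Finset.mem_insert_self _ _,
          Or.inr ⟨Finset.mem_insert_of_mem (Finset.mem_singleton_self _),
            Finset.mem_singleton_self _⟩⟩
    · rintro ⟨pr, hpr, hmem⟩
      rcases Finset.mem_insert.mp hpr with rfl | hpr
      · rcases hmem with ⟨h1, h2⟩ | ⟨h1, h2⟩
        · rw [Finset.mem_singleton.mp h1]
          rcases Finset.mem_insert.mp h2 with rfl | h2
          · exact hxy
          · rw [Finset.mem_singleton.mp h2]; exact hxw
        · rw [Finset.mem_singleton.mp h2]
          rcases Finset.mem_insert.mp h1 with rfl | h1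
          · exact hxy.symm
          · rw [Finset.mem_singleton.mp h1]; exact hxw.symm
      · obtain ⟨pr', hpr', rfl⟩ := Finset.mem_image.mp hpr
        rcases hmem with ⟨h1, h2⟩ | ⟨h1, h2⟩
        · obtain ⟨u', hu', rfl⟩ := Finset.mem_image.mp h1
          obtain ⟨v', hv', rfl⟩ := Finset.mem_image.mp h2
          exact ((hC'.2 u' v').mpr ⟨pr', hpr', Or.inl ⟨hu', hv'⟩⟩ :
            (T.comap (Subtype.val : {z // z ∈ s} → V)).Adj u' v')
        · obtain ⟨u', hu', rfl⟩ := Finset.mem_image.mp h1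
          obtain ⟨v', hv', rfl⟩ := Finset.mem_image.mp h2
          exact ((hC'.2 u' v').mpr ⟨pr', hpr', Or.inr ⟨hu', hv'⟩⟩ :
            (T.comap (Subtype.val : {z // z ∈ s} → V)).Adj u' v')
  · have hsub : sjComponents (insert (({x} : Finset V), ({y, w} : Finset V))
        (C'.image fun pr => (lift pr.1, lift pr.2))) ⊆
        insert ({x} : Finset V) (insert ({y, w} : Finset V)
          ((sjComponents C').image lift)) := by
      intro t ht
      simp only [sjComponents, Finset.mem_union] at ht
      rcases ht with ht | ht <;> obtain ⟨pr, hpr, rfl⟩ := Finset.mem_image.mp ht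
      · rcases Finset.mem_insert.mp hpr with rfl | hpr
        · exact Finset.mem_insert_self _ _
        · obtain ⟨pr', hpr', rfl⟩ := Finset.mem_image.mp hpr
          refine Finset.mem_insert_of_mem (Finset.mem_insert_of_mem (Finset.mem_image.mpr
            ⟨pr'.1, ?_, rfl⟩))
          exact Finset.mem_union_left _ (Finset.mem_image.mpr ⟨pr', hpr', rfl⟩)
      · rcases Finset.mem_insert.mp hpr with rfl | hpr
        · exact Finset.mem_insert_of_mem (Finset.mem_insert_self _ _)
        · obtain ⟨pr', hpr', rfl⟩ := Finset.mem_image.mp hpr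
          refine Finset.mem_insert_of_mem (Finset.mem_insert_of_mem (Finset.mem_image.mpr
            ⟨pr'.2, ?_, rfl⟩))
          exact Finset.mem_union_right _ (Finset.mem_image.mpr ⟨pr', hpr', rfl⟩)
    have hc1 := Finset.card_le_card hsub
    have hc2 := Finset.card_insert_le ({x} : Finset V)
      (insert ({y, w} : Finset V) ((sjComponents C').image lift))
    have hc3 := Finset.card_insert_le ({y, w} : Finset V) ((sjComponents C').image lift)
    have hc4 := Finset.card_image_le (s := sjComponents C') (f := lift)
    omega


lemma buildable_lift {V : Type*} [DecidableEq V] {T : SimpleGraph V} {s : Finset V}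
    {x y w : V} (hxs : x ∉ s) (hys : y ∉ s) (hws : w ∈ s) (hxy : T.Adj x y) (hxw : T.Adj x w)
    (hclass : ∀ a b : V, T.Adj a b →
      (a ∈ s ∧ b ∈ s) ∨ (a = x ∧ b = y) ∨ (a = y ∧ b = x) ∨ (a = x ∧ b = w) ∨ (a = w ∧ b = x))
    (hsurj_s : ∀ z : V, z = x ∨ z = y ∨ z ∈ s)
    (hB : BuildableFromP2 (T.comap (Subtype.val : {z // z ∈ s} → V))) :
    BuildableFromP2 T := by
  obtain ⟨n', p', q', w', hsurj', hinj', hw', hadj'⟩ := hB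
  have hlast0 : (Fin.last (n' + 1)) ≠ 0 := by
    intro h
    have := congrArg Fin.val h
    simp [Fin.last] at this
  refine ⟨n' + 1,
    Fin.lastCases x (fun j => (p' j : V)),
    Fin.lastCases y (fun j => (q' j : V)),
    Fin.lastCases w (fun j => (w' j : V)), ?_, ?_, ?_, ?_⟩
  · intro z
    rcases hsurj_s z with rfl | rfl | hzs
    · exact ⟨Fin.last _, Or.inl (by simp)⟩
    · exact ⟨Fin.last _, Or.inr (by simp)⟩
    · obtain ⟨j, hj⟩ := hsurj' ⟨z, hzs⟩
      refine ⟨j.castSucc, ?_⟩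
      rcases hj with hj | hj
      · exact Or.inl (by simp only [Fin.lastCases_castSucc]; exact congrArg Subtype.val hj)
      · exact Or.inr (by simp only [Fin.lastCases_castSucc]; exact congrArg Subtype.val hj)
  · rintro ⟨i1, b1⟩ ⟨i2, b2⟩ h
    simp only at h
    induction i1 using Fin.lastCases with
    | last =>
      induction i2 using Fin.lastCases with
      | last =>
        cases b1 <;> cases b2 <;>
          simp only [if_true, if_false, Bool.false_eq_true, ite_true, ite_false,
            Fin.lastCases_last] at h ⊢
        · exact absurd h.symm hxy.ne
        · exact absurd h hxy.ne
      | cast j2 =>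
        exfalso
        cases b1 <;> cases b2 <;>
          simp only [if_true, if_false, Bool.false_eq_true, ite_true, ite_false,
            Fin.lastCases_last, Fin.lastCases_castSucc] at h
        · exact hys (h.symm ▸ (q' j2).2)
        · exact hys (h.symm ▸ (p' j2).2)
        · exact hxs (h.symm ▸ (q' j2).2)
        · exact hxs (h.symm ▸ (p' j2).2)
    | cast j1 =>
      induction i2 using Fin.lastCases with
      | last =>
        exfalso
        cases b1 <;> cases b2 <;>
          simp only [if_true, if_false, Bool.false_eq_true, ite_true, ite_false,
            Fin.lastCases_last, Fin.lastCases_castSucc] at h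
        · exact hys (h ▸ (q' j1).2)
        · exact hxs (h ▸ (q' j1).2)
        · exact hys (h ▸ (p' j1).2)
        · exact hxs (h ▸ (p' j1).2)
      | cast j2 =>
        have key : (j1, b1) = (j2, b2) := by
          apply hinj'
          cases b1 <;> cases b2 <;>
            simp only [if_true, if_false, Bool.false_eq_true, ite_true, ite_false,
              Fin.lastCases_castSucc] at h ⊢ <;>
            exact Subtype.coe_injective h
        have hj : j1 = j2 := congrArg Prod.fst key
        have hb : b1 = b2 := congrArg Prod.snd key
        rw [hj, hb]
  · intro i hi
    induction i using Fin.lastCases with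
    | last =>
      obtain ⟨j0, hj0⟩ := hsurj' ⟨w, hws⟩
      refine ⟨j0.castSucc, Fin.castSucc_lt_last j0, ?_⟩
      rcases hj0 with hj0 | hj0
      · exact Or.inl (by simp only [Fin.lastCases_last, Fin.lastCases_castSucc]; exact congrArg Subtype.val hj0)
      · exact Or.inr (by simp only [Fin.lastCases_last, Fin.lastCases_castSucc]; exact congrArg Subtype.val hj0)
    | cast j =>
      have hj0 : j ≠ 0 := fun h => hi (by rw [h]; exact Fin.castSucc_zero)
      obtain ⟨j', hj', hor⟩ := hw' j hj0
      refine ⟨j'.castSucc, Fin.castSucc_lt_castSucc_iff.mpr hj', ?_⟩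
      rcases hor with hor | hor
      · exact Or.inl (by simp only [Fin.lastCases_castSucc]; exact congrArg Subtype.val hor)
      · exact Or.inr (by simp only [Fin.lastCases_castSucc]; exact congrArg Subtype.val hor)
  · intro a b
    constructor
    · intro hab
      rcases hclass a b hab with ⟨h1, h2⟩ | ⟨rfl, rfl⟩ | ⟨rfl, rfl⟩ | ⟨rfl, rfl⟩ | ⟨rfl, rfl⟩
      · obtain ⟨i, hcase⟩ := (hadj' ⟨a, h1⟩ ⟨b, h2⟩).mp hab
        refine ⟨i.castSucc, ?_⟩
        rcases hcase with ⟨ha, hb⟩ | ⟨ha, hb⟩ | ⟨hi0, ⟨ha, hb⟩ | ⟨ha, hb⟩⟩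
        · exact Or.inl ⟨by simp only [Fin.lastCases_castSucc]; exact congrArg Subtype.val ha,
            by simp only [Fin.lastCases_castSucc]; exact congrArg Subtype.val hb⟩
        · exact Or.inr (Or.inl ⟨by simp only [Fin.lastCases_castSucc]; exact congrArg Subtype.val ha,
            by simp only [Fin.lastCases_castSucc]; exact congrArg Subtype.val hb⟩)
        · exact Or.inr (Or.inr ⟨by simpa using hi0,
            Or.inl ⟨by simp only [Fin.lastCases_castSucc]; exact congrArg Subtype.val ha,
              by simp only [Fin.lastCases_castSucc]; exact congrArg Subtype.val hb⟩⟩)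
        · exact Or.inr (Or.inr ⟨by simpa using hi0,
            Or.inr ⟨by simp only [Fin.lastCases_castSucc]; exact congrArg Subtype.val ha,
              by simp only [Fin.lastCases_castSucc]; exact congrArg Subtype.val hb⟩⟩)
      · exact ⟨Fin.last _, Or.inl ⟨by simp only [Fin.lastCases_last], by simp only [Fin.lastCases_last]⟩⟩
      · exact ⟨Fin.last _, Or.inr (Or.inl ⟨by simp only [Fin.lastCases_last],
          by simp only [Fin.lastCases_last]⟩)⟩
      · exact ⟨Fin.last _, Or.inr (Or.inr ⟨hlast0,
          Or.inr ⟨by simp only [Fin.lastCases_last], by simp only [Fin.lastCases_last]⟩⟩)⟩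
      · exact ⟨Fin.last _, Or.inr (Or.inr ⟨hlast0,
          Or.inl ⟨by simp only [Fin.lastCases_last], by simp only [Fin.lastCases_last]⟩⟩)⟩
    · rintro ⟨i, hcase⟩
      induction i using Fin.lastCases with
      | last =>
        simp only [Fin.lastCases_last] at hcase
        rcases hcase with ⟨rfl, rfl⟩ | ⟨rfl, rfl⟩ | ⟨-, ⟨rfl, rfl⟩ | ⟨rfl, rfl⟩⟩
        · exact hxy
        · exact hxy.symm
        · exact hxw.symm
        · exact hxw
      | cast j =>
        simp only [Fin.lastCases_castSucc] at hcase
        rcases hcase with ⟨rfl, rfl⟩ | ⟨rfl, rfl⟩ | ⟨hj0, ⟨rfl, rfl⟩ | ⟨rfl, rfl⟩⟩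
        · exact ((hadj' (p' j) (q' j)).mpr ⟨j, Or.inl ⟨rfl, rfl⟩⟩ :
            (T.comap (Subtype.val : {z // z ∈ s} → V)).Adj (p' j) (q' j))
        · exact ((hadj' (p' j) (q' j)).mpr ⟨j, Or.inl ⟨rfl, rfl⟩⟩ :
            (T.comap (Subtype.val : {z // z ∈ s} → V)).Adj (p' j) (q' j)).symm
        · have hj0' : j ≠ 0 := fun h => hj0 (by rw [h]; exact Fin.castSucc_zero)
          exact ((hadj' (w' j) (p' j)).mpr ⟨j, Or.inr (Or.inr ⟨hj0', Or.inl ⟨rfl, rfl⟩⟩)⟩ :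
            (T.comap (Subtype.val : {z // z ∈ s} → V)).Adj (w' j) (p' j))
        · have hj0' : j ≠ 0 := fun h => hj0 (by rw [h]; exact Fin.castSucc_zero)
          exact ((hadj' (w' j) (p' j)).mpr ⟨j, Or.inr (Or.inr ⟨hj0', Or.inl ⟨rfl, rfl⟩⟩)⟩ :
            (T.comap (Subtype.val : {z // z ∈ s} → V)).Adj (w' j) (p' j)).symm


theorem dichotomy : ∀ (n : ℕ) {V : Type*} [Fintype V] [DecidableEq V] (T : SimpleGraph V),
    Fintype.card V = n → T.IsTree → 2 ≤ Fintype.card V →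
    BuildableFromP2 T ∨ ∃ C, (ofSimple T).IsCover C ∧ (sjComponents C).card < Fintype.card V := by
  intro n
  induction n using Nat.strong_induction_on with
  | _ n IH =>
  intro V _ _ T hcard hT h2
  rcases eq_or_lt_of_le (hcard ▸ h2) with hn2 | hn3
  · -- base case: exactly two vertices
    left
    obtain ⟨a, b, hab, huniv⟩ := Nat.card_eq_two_iff.mp
      (by rw [Nat.card_eq_fintype_card (α := V)]; exact hcard.trans hn2.symm)
    have hmem : ∀ z : V, z = a ∨ z = b := by
      intro z
      have : z ∈ ({a, b} : Set V) := huniv ▸ Set.mem_univ z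
      simpa using this
    have hadj : T.Adj a b := by
      obtain ⟨p, hp, -⟩ := hT.existsUnique_path a b
      cases p with
      | nil => exact absurd rfl hab
      | @cons _ c _ h q =>
        rcases hmem c with rfl | rfl
        · exact absurd rfl h.ne
        · exact h
    refine ⟨0, fun _ => a, fun _ => b, fun _ => a, fun z => ⟨0, hmem z⟩, ?_, ?_, ?_⟩
    · rintro ⟨i1, b1⟩ ⟨i2, b2⟩ h
      have hi : i1 = i2 := (Fin.fin_one_eq_zero i1).trans (Fin.fin_one_eq_zero i2).symm
      subst hi
      cases b1 <;> cases b2 <;> simp_all <;> exact hab (by simp_all [eq_comm])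
    · intro i hi
      exact absurd (Fin.fin_one_eq_zero i) hi
    · intro u v
      constructor
      · intro h
        rcases hmem u with rfl | rfl <;> rcases hmem v with rfl | rfl
        · exact absurd rfl h.ne
        · exact ⟨0, Or.inl ⟨rfl, rfl⟩⟩
        · exact ⟨0, Or.inr (Or.inl ⟨rfl, rfl⟩)⟩
        · exact absurd rfl h.ne
      · rintro ⟨i, ⟨rfl, rfl⟩ | h⟩
        · exact hadj
        · rcases h with ⟨rfl, rfl⟩ | ⟨hi, -⟩
          · exact hadj.symm
          · exact absurd (Fin.fin_one_eq_zero i) hi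
  · -- at least three vertices
    have h3 : 3 ≤ Fintype.card V := hcard ▸ hn3
    obtain ⟨x, y, hxy, hleafy, hcase⟩ := exists_pendant hT h3
    rcases hcase with ⟨y', hy'y, hxy', hleafy'⟩ | ⟨w, hwy, hxw, hNx⟩
    · -- Case A: two pendant leaves at x
      right
      classical
      have hxny : x ≠ y := hxy.ne
      have hxny' : x ≠ y' := hxy'.ne
      set Nx := Finset.univ.filter (fun z => T.Adj x z) with hNxdef
      set Cr := (Finset.univ.filter fun e : V × V => T.Adj e.1 e.2 ∧ e.1 ≠ x ∧ e.2 ≠ x).image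
          (fun e => (({e.1} : Finset V), ({e.2} : Finset V))) with hCrdef
      have hCr_mem : ∀ pr : Finset V × Finset V, pr ∈ Cr ↔
          ∃ e : V × V, (T.Adj e.1 e.2 ∧ e.1 ≠ x ∧ e.2 ≠ x) ∧ pr = ({e.1}, {e.2}) := by
        intro pr
        rw [hCrdef]
        simp only [Finset.mem_image, Finset.mem_filter, Finset.mem_univ, true_and]
        constructor
        · rintro ⟨e, he, rfl⟩; exact ⟨e, he, rfl⟩
        · rintro ⟨e, he, rfl⟩; exact ⟨e, he, rfl⟩
      refine ⟨insert ({x}, Nx) Cr, ⟨?_, ?_⟩, ?_⟩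
      · intro pr hpr
        rcases Finset.mem_insert.mp hpr with rfl | hpr
        · exact ⟨⟨x, Finset.mem_singleton_self x⟩,
            ⟨y, by rw [hNxdef]; exact Finset.mem_filter.mpr ⟨Finset.mem_univ _, hxy⟩⟩⟩
        · obtain ⟨e, -, rfl⟩ := (hCr_mem pr).mp hpr
          exact ⟨⟨e.1, Finset.mem_singleton_self _⟩, ⟨e.2, Finset.mem_singleton_self _⟩⟩
      · intro u v
        constructor
        · intro h
          have h' : T.Adj u v := h
          rcases eq_or_ne u x with rfl | hux
          · exact ⟨({u}, Nx), Finset.mem_insert_self _ _,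
              Or.inl ⟨Finset.mem_singleton_self _,
                by rw [hNxdef]; exact Finset.mem_filter.mpr ⟨Finset.mem_univ _, h'⟩⟩⟩
          · rcases eq_or_ne v x with rfl | hvx
            · exact ⟨({v}, Nx), Finset.mem_insert_self _ _,
                Or.inr ⟨by rw [hNxdef]; exact Finset.mem_filter.mpr ⟨Finset.mem_univ _, h'.symm⟩,
                  Finset.mem_singleton_self _⟩⟩
            · exact ⟨({u}, {v}), Finset.mem_insert_of_mem ((hCr_mem _).mpr
                ⟨(u, v), ⟨h', hux, hvx⟩, rfl⟩),
                Or.inl ⟨Finset.mem_singleton_self _, Finset.mem_singleton_self _⟩⟩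
        · rintro ⟨pr, hpr, hmem⟩
          rcases Finset.mem_insert.mp hpr with rfl | hpr
          · rcases hmem with ⟨h1, h2⟩ | ⟨h1, h2⟩
            · rw [Finset.mem_singleton.mp h1]
              rw [hNxdef] at h2
              exact (Finset.mem_filter.mp h2).2
            · rw [Finset.mem_singleton.mp h2]
              rw [hNxdef] at h1
              exact ((Finset.mem_filter.mp h1).2).symm
          · obtain ⟨e, he, rfl⟩ := (hCr_mem pr).mp hpr
            rcases hmem with ⟨h1, h2⟩ | ⟨h1, h2⟩
            · rw [Finset.mem_singleton.mp h1, Finset.mem_singleton.mp h2]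
              exact he.1
            · rw [Finset.mem_singleton.mp h2, Finset.mem_singleton.mp h1]
              exact he.1.symm
      · have hsub : sjComponents (insert ({x}, Nx) Cr) ⊆
            insert Nx (((Finset.univ.erase y).erase y').image fun v => ({v} : Finset V)) := by
          intro t ht
          have hxee : x ∈ (Finset.univ.erase y).erase y' :=
            Finset.mem_erase.mpr ⟨hxny', Finset.mem_erase.mpr ⟨hxny, Finset.mem_univ _⟩⟩
          simp only [sjComponents, Finset.mem_union] at ht
          rcases ht with ht | ht <;> obtain ⟨pr, hpr, rfl⟩ := Finset.mem_image.mp ht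
          · rcases Finset.mem_insert.mp hpr with rfl | hpr
            · exact Finset.mem_insert_of_mem (Finset.mem_image.mpr ⟨x, hxee, rfl⟩)
            · obtain ⟨e, he, rfl⟩ := (hCr_mem pr).mp hpr
              have h1y : e.1 ≠ y := fun hey => he.2.2 (hleafy e.2 (hey ▸ he.1))
              have h1y' : e.1 ≠ y' := fun hey => he.2.2 (hleafy' e.2 (hey ▸ he.1))
              exact Finset.mem_insert_of_mem (Finset.mem_image.mpr ⟨e.1,
                Finset.mem_erase.mpr ⟨h1y', Finset.mem_erase.mpr ⟨h1y, Finset.mem_univ _⟩⟩, rfl⟩)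
          · rcases Finset.mem_insert.mp hpr with rfl | hpr
            · exact Finset.mem_insert_self _ _
            · obtain ⟨e, he, rfl⟩ := (hCr_mem pr).mp hpr
              have h2y : e.2 ≠ y := fun hey => he.2.1 (hleafy e.1 (hey ▸ he.1).symm)
              have h2y' : e.2 ≠ y' := fun hey => he.2.1 (hleafy' e.1 (hey ▸ he.1).symm)
              exact Finset.mem_insert_of_mem (Finset.mem_image.mpr ⟨e.2,
                Finset.mem_erase.mpr ⟨h2y', Finset.mem_erase.mpr ⟨h2y, Finset.mem_univ _⟩⟩, rfl⟩)
        have hc1 := Finset.card_le_card hsub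
        have hc2 := Finset.card_insert_le Nx
          (((Finset.univ.erase y).erase y').image fun v => ({v} : Finset V))
        have hc3 := Finset.card_image_le (s := (Finset.univ.erase y).erase y')
          (f := fun v => ({v} : Finset V))
        have hy'mem : y' ∈ Finset.univ.erase y :=
          Finset.mem_erase.mpr ⟨hy'y, Finset.mem_univ _⟩
        have hc4 : ((Finset.univ.erase y).erase y').card = Fintype.card V - 2 := by
          rw [Finset.card_erase_of_mem hy'mem, Finset.card_erase_of_mem (Finset.mem_univ _),
            Finset.card_univ]
          omega
        omega
    · -- Case B
      classical
      have hxny : x ≠ y := hxy.ne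
      have hxnw : x ≠ w := hxw.ne
      set s : Finset V := (Finset.univ.erase y).erase x with hsdef
      have hs_mem : ∀ z : V, z ∈ s ↔ z ≠ x ∧ z ≠ y := by
        intro z
        rw [hsdef]
        simp only [Finset.mem_erase, Finset.mem_univ, and_true]
      have hws : w ∈ s := (hs_mem w).mpr ⟨fun h => hxnw h.symm, hwy⟩
      have hxs : x ∉ s := fun h => ((hs_mem x).mp h).1 rfl
      have hys : y ∉ s := fun h => ((hs_mem y).mp h).2 rfl
      have hscard : s.card = Fintype.card V - 2 := by
        rw [hsdef, Finset.card_erase_of_mem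
            (Finset.mem_erase.mpr ⟨hxny, Finset.mem_univ _⟩),
          Finset.card_erase_of_mem (Finset.mem_univ _), Finset.card_univ]
        omega
      have hclass : ∀ a b : V, T.Adj a b →
          (a ∈ s ∧ b ∈ s) ∨ (a = x ∧ b = y) ∨ (a = y ∧ b = x) ∨
          (a = x ∧ b = w) ∨ (a = w ∧ b = x) := by
        intro a b hab
        rcases eq_or_ne a x with rfl | hax
        · rcases hNx b hab with rfl | rfl
          · exact Or.inr (Or.inl ⟨rfl, rfl⟩)
          · exact Or.inr (Or.inr (Or.inr (Or.inl ⟨rfl, rfl⟩)))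
        · rcases eq_or_ne b x with rfl | hbx
          · rcases hNx a hab.symm with rfl | rfl
            · exact Or.inr (Or.inr (Or.inl ⟨rfl, rfl⟩))
            · exact Or.inr (Or.inr (Or.inr (Or.inr ⟨rfl, rfl⟩)))
          · have hay : a ≠ y := fun h => hbx (hleafy b (h ▸ hab))
            have hby : b ≠ y := fun h => hax (hleafy a (h ▸ hab).symm)
            exact Or.inl ⟨(hs_mem a).mpr ⟨hax, hay⟩, (hs_mem b).mpr ⟨hbx, hby⟩⟩
      rcases eq_or_lt_of_le (show 1 ≤ s.card by omega) with hs1 | hs2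
      · -- |V| = 3 : direct cover
        right
        obtain ⟨c, hc⟩ := Finset.card_eq_one.mp hs1.symm
        have hwc : w = c := by rw [hc] at hws; exact Finset.mem_singleton.mp hws
        subst hwc
        refine ⟨{({x}, {y, w})}, ⟨?_, ?_⟩, ?_⟩
        · intro pr hpr
          rw [Finset.mem_singleton.mp hpr]
          exact ⟨⟨x, Finset.mem_singleton_self _⟩, ⟨y, Finset.mem_insert_self _ _⟩⟩
        · intro u v
          constructor
          · intro h
            have h' : T.Adj u v := h
            rcases hclass u v h' with ⟨h1, h2⟩ | ⟨rfl, rfl⟩ | ⟨rfl, rfl⟩ | ⟨rfl, rfl⟩ | ⟨rfl, rfl⟩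
            · rw [hc] at h1 h2
              rw [Finset.mem_singleton.mp h1, Finset.mem_singleton.mp h2] at h'
              exact absurd rfl h'.ne
            · exact ⟨_, Finset.mem_singleton_self _,
                Or.inl ⟨Finset.mem_singleton_self _, Finset.mem_insert_self _ _⟩⟩
            · exact ⟨_, Finset.mem_singleton_self _,
                Or.inr ⟨Finset.mem_insert_self _ _, Finset.mem_singleton_self _⟩⟩
            · exact ⟨_, Finset.mem_singleton_self _,
                Or.inl ⟨Finset.mem_singleton_self _,
                  Finset.mem_insert_of_mem (Finset.mem_singleton_self _)⟩⟩
            · exact ⟨_, Finset.mem_singleton_self _,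
                Or.inr ⟨Finset.mem_insert_of_mem (Finset.mem_singleton_self _),
                  Finset.mem_singleton_self _⟩⟩
          · rintro ⟨pr, hpr, hmem⟩
            rw [Finset.mem_singleton.mp hpr] at hmem
            rcases hmem with ⟨h1, h2⟩ | ⟨h1, h2⟩
            · rw [Finset.mem_singleton.mp h1]
              rcases Finset.mem_insert.mp h2 with rfl | h2
              · exact hxy
              · rw [Finset.mem_singleton.mp h2]; exact hxw
            · rw [Finset.mem_singleton.mp h2]
              rcases Finset.mem_insert.mp h1 with rfl | h1
              · exact hxy.symm
              · rw [Finset.mem_singleton.mp h1]; exact hxw.symm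
        · have hsub : sjComponents {(({x} : Finset V), ({y, w} : Finset V))} ⊆
              {({x} : Finset V), ({y, w} : Finset V)} := by
            intro t ht
            simp only [sjComponents, Finset.mem_union, Finset.image_singleton,
              Finset.mem_singleton] at ht
            rcases ht with rfl | rfl <;> simp
          have hb1 := Finset.card_le_card hsub
          have hb2 := Finset.card_insert_le ({x} : Finset V) {({y, w} : Finset V)}
          have hb3 : ({({y, w} : Finset V)} : Finset (Finset V)).card = 1 :=
            Finset.card_singleton _
          omega
      · -- recurse on the induced subtree
        set T' : SimpleGraph {z // z ∈ s} := T.comap (Subtype.val : {z // z ∈ s} → V)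
          with hT'def
        have hsupp : ∀ (a b : V), a ∈ s → b ∈ s → ∀ (p : T.Walk a b), p.IsPath →
            ∀ z ∈ p.support, z ∈ s := by
          intro a b ha hb p hp
          have hynotin : y ∉ p.support := by
            intro hyp
            have hya : y ≠ a := fun h => ((hs_mem a).mp ha).2 h.symm
            have hyb : y ≠ b := fun h => ((hs_mem b).mp hb).2 h.symm
            obtain ⟨c, d, hcd, hyc, hyd, -, -⟩ := interior_two_nbrs hp hyp hya hyb
            exact hcd ((hleafy c hyc).trans (hleafy d hyd).symm)
          have hxnotin : x ∉ p.support := by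
            intro hxp
            have hxa : x ≠ a := fun h => ((hs_mem a).mp ha).1 h.symm
            have hxb : x ≠ b := fun h => ((hs_mem b).mp hb).1 h.symm
            obtain ⟨c, d, hcd, hxc, hxd, hcs, hds⟩ := interior_two_nbrs hp hxp hxa hxb
            refine hynotin ?_
            rcases hNx c hxc with rfl | rfl
            · exact hcs
            · rcases hNx d hxd with rfl | rfl
              · exact hds
              · exact absurd rfl hcd
          intro z hz
          refine (hs_mem z).mpr ⟨?_, ?_⟩
          · intro h; exact hxnotin (h ▸ hz)
          · intro h; exact hynotin (h ▸ hz)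
        haveI : Nonempty {z // z ∈ s} := ⟨⟨w, hws⟩⟩
        have hT' : T'.IsTree := by
          constructor
          · refine ⟨fun a b => ?_⟩
            obtain ⟨p, hp, -⟩ := hT.existsUnique_path (a : V) (b : V)
            exact walk_comap p (hsupp a b a.2 b.2 p hp) a.2 b.2
          · intro v c hc
            have hc' : (c.map (⟨Subtype.val, fun {a b} h => h⟩ :
                T' →g T)).IsCycle :=
              (SimpleGraph.Walk.map_isCycle_iff_of_injective
                Subtype.val_injective).mpr hc
            exact hT.IsAcyclic _ hc'
        have hcardV' : Fintype.card {z // z ∈ s} = s.card := Fintype.card_coe s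
        have hsurj_s : ∀ z : V, z = x ∨ z = y ∨ z ∈ s := by
          intro z
          rcases eq_or_ne z x with rfl | hzx
          · exact Or.inl rfl
          · rcases eq_or_ne z y with rfl | hzy
            · exact Or.inr (Or.inl rfl)
            · exact Or.inr (Or.inr ((hs_mem z).mpr ⟨hzx, hzy⟩))
        rcases IH s.card (by omega) T' hcardV' hT' (by omega) with hB' | ⟨C', hC', hlt'⟩
        · exact Or.inl (buildable_lift hxs hys hws hxy hxw hclass hsurj_s hB')
        · right
          obtain ⟨C, hC, hCcard⟩ := cover_lift x y w hxy hxw hclass hC'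
          refine ⟨C, hC, ?_⟩
          rw [hcardV'] at hlt'
          omega

/-- For a tree `T` with at least two vertices, `gap T = 0` iff
`T` is obtained from `P₂` by repeatedly attaching pendant paths `P₂`. -/
theorem stmt_13 {V : Type*} [Fintype V] [DecidableEq V] (T : SimpleGraph V)
    (hT : T.IsTree) (h2 : 2 ≤ Fintype.card V) :
    (ofSimple T).gap = 0 ↔ BuildableFromP2 T := by
  constructor
  · intro hgap
    have hstp : Fintype.card V ≤ (ofSimple T).stp := Nat.le_of_sub_eq_zero hgap
    rcases dichotomy (Fintype.card V) T rfl hT h2 with hB | ⟨C, hC, hlt⟩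
    · exact hB
    · exfalso
      have hle : (ofSimple T).stp ≤ (sjComponents C).card := Nat.sInf_le ⟨C, hC, rfl⟩
      omega
  · intro hB
    obtain ⟨f, hf, hinv⟩ := buildable_matching hB
    obtain ⟨C0, hC0, -⟩ := exists_cover T
    have hne : {m | ∃ C : Finset (Finset V × Finset V),
        (ofSimple T).IsCover C ∧ (sjComponents C).card = m}.Nonempty := ⟨_, C0, hC0, rfl⟩
    have hub : ∀ m ∈ {m | ∃ C : Finset (Finset V × Finset V),
        (ofSimple T).IsCover C ∧ (sjComponents C).card = m}, Fintype.card V ≤ m := by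
      rintro m ⟨C, hC, rfl⟩
      exact components_ge hT hf hinv hC
    have hstp : Fintype.card V ≤ (ofSimple T).stp := le_csInf hne hub
    exact Nat.sub_eq_zero_of_le hstp
end

section
/- Let K_n be the complete graph on n ≥ 2 vertices. Let G_n be the graph obtained from K_n by subdividing each edge twice (replacing each edge by a path with 2 internal vertices). Then gap(G_n) = 0, i.e., stp(G_n) = |V(G_n)| = n + 2·C(n,2). -/
open LoopGraph

/-- `zeta ends` is the graph obtained from the multigraph with edge set `E`
and endpoint map `ends` by replacing every edge `e` with endpoints `(x, y)`
by the path `x — (e,0) — (e,1) — y` (each edge subdivided twice). -/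
def zeta {V E : Type*} (ends : E → V × V) : LoopGraph (V ⊕ E × Fin 2) where
  Adj x y :=
    (∃ e : E, (x = Sum.inl (ends e).1 ∧ y = Sum.inr (e, 0)) ∨
              (y = Sum.inl (ends e).1 ∧ x = Sum.inr (e, 0))) ∨
    (∃ e : E, (x = Sum.inr (e, 0) ∧ y = Sum.inr (e, 1)) ∨
              (y = Sum.inr (e, 0) ∧ x = Sum.inr (e, 1))) ∨
    (∃ e : E, (x = Sum.inl (ends e).2 ∧ y = Sum.inr (e, 1)) ∨
              (y = Sum.inl (ends e).2 ∧ x = Sum.inr (e, 1)))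
  symm := by
    rintro x y (⟨e, h | h⟩ | ⟨e, h | h⟩ | ⟨e, h | h⟩)
    · exact Or.inl ⟨e, Or.inr h⟩
    · exact Or.inl ⟨e, Or.inl h⟩
    · exact Or.inr (Or.inl ⟨e, Or.inr h⟩)
    · exact Or.inr (Or.inl ⟨e, Or.inl h⟩)
    · exact Or.inr (Or.inr ⟨e, Or.inr h⟩)
    · exact Or.inr (Or.inr ⟨e, Or.inl h⟩)

/-- The graph obtained from the complete graph `K n` by subdividing every edge
twice. -/
def subdivKn (n : ℕ) :
    LoopGraph (Fin n ⊕ ({p : Fin n × Fin n // p.1 < p.2} × Fin 2)) :=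
  zeta fun e => (e.1.1, e.1.2)

/-!
Every component of a set-join cover lies in the neighbourhood of a vertex. The partner of a
subdivision vertex `x` has only `x` and one original vertex `u` as neighbours, so `{x}` or
`{u, x}` is a component; these are distinct for distinct `x`. An original vertex `v` with a
half-edge towards `w` contributes `{v}`, or `{v, x'}` where `x'` is the subdivision vertex next
to `w` and `{x'}` is a component, or else a component containing `x'` inside the neighbourhood
of `w`. When `v ↦ w` is injective (a rotation of the vertices of `K n`), all these components
are distinct, so every cover has at least `|V|` components; joining the two ends of each edge
attains `|V|`.
-/

open Finset Function

namespace LoopGraph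

variable {V : Type*}

theorem adj_comm (G : LoopGraph V) (u v : V) : G.Adj u v ↔ G.Adj v u :=
  ⟨G.symm u v, G.symm v u⟩

variable [DecidableEq V] {G : LoopGraph V} {C : Finset (Finset V × Finset V)}

def edgeCover [Fintype V] (G : LoopGraph V) [DecidableRel G.Adj] :
    Finset (Finset V × Finset V) :=
  (univ.filter fun q : V × V => G.Adj q.1 q.2).image fun q => ({q.1}, {q.2})

theorem isCover_edgeCover [Fintype V] [DecidableRel G.Adj] : G.IsCover G.edgeCover := by
  refine ⟨fun p hp => ?_, fun u v => ⟨fun h => ?_, ?_⟩⟩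
  · obtain ⟨q, -, rfl⟩ := mem_image.mp hp
    exact ⟨singleton_nonempty _, singleton_nonempty _⟩
  · exact ⟨({u}, {v}), mem_image.mpr ⟨(u, v), by simpa using h, rfl⟩, Or.inl (by simp)⟩
  · rintro ⟨p, hp, hpuv⟩
    obtain ⟨q, hq, rfl⟩ := mem_image.mp hp
    replace hq : G.Adj q.1 q.2 := (mem_filter.mp hq).2
    simp only [mem_singleton] at hpuv
    rcases hpuv with ⟨rfl, rfl⟩ | ⟨rfl, rfl⟩
    · exact hq
    · exact G.symm _ _ hq

theorem sjComponents_edgeCover_subset [Fintype V] [DecidableRel G.Adj] :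
    sjComponents G.edgeCover ⊆ univ.image ({·}) := by
  intro D hD
  simp only [sjComponents, edgeCover, mem_union, mem_image] at hD
  obtain ⟨-, ⟨q, -, rfl⟩, rfl⟩ | ⟨-, ⟨q, -, rfl⟩, rfl⟩ := hD <;> simp

theorem stp_le_card [Fintype V] (G : LoopGraph V) : G.stp ≤ Fintype.card V := by
  classical
  calc G.stp ≤ #(sjComponents G.edgeCover) := Nat.sInf_le ⟨_, isCover_edgeCover, rfl⟩
    _ ≤ #(univ.image ({·} : V → Finset V)) := card_le_card sjComponents_edgeCover_subset
    _ ≤ Fintype.card V := card_image_le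

theorem exists_isCover_card_eq_stp [Fintype V] (G : LoopGraph V) :
    ∃ C, G.IsCover C ∧ #(sjComponents C) = G.stp := by
  classical
  exact Nat.sInf_mem (s := {n | ∃ C, G.IsCover C ∧ #(sjComponents C) = n})
    ⟨_, _, isCover_edgeCover, rfl⟩

theorem IsCover.exists_mem_sjComponents (hC : G.IsCover C) {u x : V} (h : G.Adj u x) :
    ∃ L ∈ sjComponents C, x ∈ L ∧ ∀ b ∈ L, G.Adj u b := by
  obtain ⟨p, hp, ⟨hu, hx⟩ | ⟨hu, hx⟩⟩ := (hC.2 u x).mp h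
  · exact ⟨p.2, mem_union_right _ (mem_image_of_mem _ hp), hx,
      fun b hb => (hC.2 u b).mpr ⟨p, hp, Or.inl ⟨hu, hb⟩⟩⟩
  · exact ⟨p.1, mem_union_left _ (mem_image_of_mem _ hp), hx,
      fun b hb => (hC.2 u b).mpr ⟨p, hp, Or.inr ⟨hu, hb⟩⟩⟩

theorem IsCover.singleton_mem_or_pair_mem (hC : G.IsCover C) {u x a : V} (h : G.Adj u x)
    (hu : ∀ b, G.Adj u b → b = a ∨ b = x) :
    {x} ∈ sjComponents C ∨ {a, x} ∈ sjComponents C := by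
  obtain ⟨L, hL, hxL, hLu⟩ := hC.exists_mem_sjComponents h
  have hLsub : L ⊆ {a, x} := fun b hb => by simpa using hu b (hLu b hb)
  by_cases ha : a ∈ L
  · exact .inr (Subset.antisymm hLsub (insert_subset ha (singleton_subset_iff.2 hxL)) ▸ hL)
  · refine .inl (eq_singleton_iff_unique_mem.2 ⟨hxL, fun b hb => ?_⟩ ▸ hL)
    exact mem_singleton.1 ((mem_insert.1 (hLsub hb)).resolve_left (ne_of_mem_of_not_mem hb ha))

end LoopGraph

namespace zeta

open LoopGraph

variable {V E : Type*} {ends : E → V × V}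

variable (ends) in
def endpoint (x : E × Fin 2) : V := if x.2 = 0 then (ends x.1).1 else (ends x.1).2

def partner (x : E × Fin 2) : E × Fin 2 := (x.1, x.2.rev)

@[simp] theorem partner_partner (x : E × Fin 2) : partner (partner x) = x := by
  simp [partner]

theorem adj_inr_iff (x : E × Fin 2) (z : V ⊕ E × Fin 2) :
    (zeta ends).Adj (.inr x) z ↔ z = .inl (endpoint ends x) ∨ z = .inr (partner x) := by
  obtain ⟨e, i⟩ := x
  fin_cases i
  · simp [zeta, endpoint, partner, Prod.ext_iff, eq_comm]
  · simpa [zeta, endpoint, partner, Prod.ext_iff, eq_comm] using or_comm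

theorem not_adj_inl_inl (v w : V) : ¬ (zeta ends).Adj (.inl v) (.inl w) := by
  simp [zeta]

theorem adj_inl_inr_iff (v : V) (x : E × Fin 2) :
    (zeta ends).Adj (.inl v) (.inr x) ↔ endpoint ends x = v := by
  rw [adj_comm, adj_inr_iff]
  simp [eq_comm]

theorem exists_endpoint_eq_of_ne {α : Type*} [LinearOrder α] {v w : α} (h : v ≠ w) :
    ∃ x, endpoint (fun e : {p : α × α // p.1 < p.2} => (e.1.1, e.1.2)) x = v ∧
      endpoint (fun e : {p : α × α // p.1 < p.2} => (e.1.1, e.1.2)) (partner x) = w := by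
  rcases h.lt_or_gt with h | h
  · exact ⟨(⟨(v, w), h⟩, 0), by simp [endpoint, partner]⟩
  · exact ⟨(⟨(w, v), h⟩, 1), by simp [endpoint, partner]⟩

variable [DecidableEq V] [DecidableEq E]
  {C : Finset (Finset (V ⊕ E × Fin 2) × Finset (V ⊕ E × Fin 2))}
  {S : Finset (Finset (V ⊕ E × Fin 2))}

variable (ends) in
def subdivComponent (S : Finset (Finset (V ⊕ E × Fin 2))) (x : E × Fin 2) :
    Finset (V ⊕ E × Fin 2) :=
  if {.inr x} ∈ S then {.inr x} else {.inl (endpoint ends (partner x)), .inr x}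

theorem subdivComponent_mem (hC : (zeta ends).IsCover C) (x : E × Fin 2) :
    subdivComponent ends (sjComponents C) x ∈ sjComponents C := by
  unfold subdivComponent
  split_ifs with hx
  · exact hx
  · refine (hC.singleton_mem_or_pair_mem (u := .inr (partner x)) ?_ fun b hb => ?_).resolve_left hx
    · simp [adj_inr_iff]
    · simpa using (adj_inr_iff _ _).1 hb

theorem inr_mem_subdivComponent (x : E × Fin 2) : .inr x ∈ subdivComponent ends S x := by
  unfold subdivComponent
  split_ifs <;> simp

theorem eq_of_inr_mem_subdivComponent {x y : E × Fin 2}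
    (h : .inr y ∈ subdivComponent ends S x) : y = x := by
  unfold subdivComponent at h
  split_ifs at h <;> simpa using h

theorem subdivComponent_injective : Injective (subdivComponent ends S) := fun x _ h =>
  eq_of_inr_mem_subdivComponent (h ▸ inr_mem_subdivComponent x)

variable (ends) in
def IsVertexComponent (S : Finset (Finset (V ⊕ E × Fin 2))) (v w : V)
    (D : Finset (V ⊕ E × Fin 2)) : Prop :=
  D ∈ S ∧ D ∉ Set.range (subdivComponent ends S) ∧
    ((.inl v ∈ D ∧ ∀ u, .inl u ∈ D → u = v) ∨
      (D.Nonempty ∧ ∀ b ∈ D, (zeta ends).Adj (.inl w) b))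

theorem IsVertexComponent.eq_or_eq {v v' w w' : V} {D : Finset (V ⊕ E × Fin 2)}
    (h : IsVertexComponent ends S v w D) (h' : IsVertexComponent ends S v' w' D) :
    v = v' ∨ w = w' := by
  obtain ⟨-, -, ⟨hv, -⟩ | ⟨hne, hw⟩⟩ := h <;>
    obtain ⟨-, -, ⟨hv', hD'⟩ | ⟨-, hw'⟩⟩ := h'
  · exact .inl (hD' v hv)
  · exact absurd (hw' _ hv) (not_adj_inl_inl _ _)
  · exact absurd (hw _ hv') (not_adj_inl_inl _ _)
  · obtain ⟨b | y, hb⟩ := hne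
    · exact absurd (hw _ hb) (not_adj_inl_inl _ _)
    · exact .inr (((adj_inl_inr_iff _ _).1 (hw _ hb)).symm.trans
        ((adj_inl_inr_iff _ _).1 (hw' _ hb)))

theorem exists_isVertexComponent (hC : (zeta ends).IsCover C) (x : E × Fin 2) :
    ∃ D, IsVertexComponent ends (sjComponents C) (endpoint ends x)
      (endpoint ends (partner x)) D := by
  set S := sjComponents C
  set v := endpoint ends x
  set y := partner x
  by_cases hv : {.inl v} ∈ S
  · refine ⟨{.inl v}, hv, ?_, .inl (by simp)⟩
    rintro ⟨z, hz⟩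
    have hzv := hz ▸ inr_mem_subdivComponent (ends := ends) (S := S) z
    simp at hzv
  by_cases hy : {.inr y} ∈ S
  · have hpair : {.inr y, .inl v} ∈ S := by
      refine (hC.singleton_mem_or_pair_mem (u := .inr x) ?_ fun b hb => ?_).resolve_left hv
      · simp [v, adj_inr_iff]
      · simpa [y, or_comm] using (adj_inr_iff _ _).1 hb
    refine ⟨_, hpair, ?_, .inl (by simp)⟩
    rintro ⟨z, hz⟩
    obtain rfl : z = y := (eq_of_inr_mem_subdivComponent (hz ▸ mem_insert_self _ _)).symm
    rw [subdivComponent, if_pos hy] at hz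
    have hvy : Sum.inl v ∈ ({.inr y} : Finset (V ⊕ E × Fin 2)) := hz ▸ by simp
    simp at hvy
  · obtain ⟨L, hL, hyL, hLw⟩ :=
      hC.exists_mem_sjComponents (u := .inl (endpoint ends y)) ((adj_inl_inr_iff _ _).2 rfl)
    refine ⟨L, hL, ?_, .inr ⟨⟨_, hyL⟩, hLw⟩⟩
    rintro ⟨z, rfl⟩
    unfold subdivComponent at hyL hLw
    split_ifs at hyL hLw with hz
    · obtain rfl : y = z := by simpa using hyL
      exact hy hz
    · exact not_adj_inl_inl _ _ (hLw _ (mem_insert_self _ _))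

theorem card_le_card_sjComponents [Fintype V] [Fintype E] (hC : (zeta ends).IsCover C)
    {σ : V → V} (hσ : Injective σ)
    (hends : ∀ v, ∃ x, endpoint ends x = v ∧ endpoint ends (partner x) = σ v) :
    Fintype.card (V ⊕ E × Fin 2) ≤ #(sjComponents C) := by
  choose x hx hxσ using hends
  choose d hd using fun v => exists_isVertexComponent hC (x v)
  have hd_inj : Injective d := fun v v' h =>
    ((hd v).eq_or_eq (h ▸ hd v')).elim (fun hv => by rwa [hx, hx] at hv)
      fun hw => hσ (by rwa [hxσ, hxσ] at hw)
  have hinj : Injective (Sum.elim d (subdivComponent ends (sjComponents C))) :=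
    hd_inj.sumElim subdivComponent_injective fun v y h => (hd v).2.1 ⟨y, h.symm⟩
  calc Fintype.card (V ⊕ E × Fin 2) = #(univ : Finset (V ⊕ E × Fin 2)) := card_univ.symm
    _ ≤ #(sjComponents C) := by
      refine card_le_card_of_injOn _ ?_ hinj.injOn
      rintro (v | y) -
      exacts [(hd v).1, subdivComponent_mem hC y]

theorem stp_eq_card [Fintype V] [Fintype E] {σ : V → V} (hσ : Injective σ)
    (hends : ∀ v, ∃ x, endpoint ends x = v ∧ endpoint ends (partner x) = σ v) :
    (zeta ends).stp = Fintype.card (V ⊕ E × Fin 2) := by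
  obtain ⟨C, hC, hCstp⟩ := (zeta ends).exists_isCover_card_eq_stp
  exact (stp_le_card _).antisymm (hCstp ▸ card_le_card_sjComponents hC hσ hends)

end zeta

theorem finRotate_ne_self {n : ℕ} (hn : 2 ≤ n) (v : Fin n) : finRotate n v ≠ v := by
  obtain ⟨m, rfl⟩ := Nat.exists_eq_add_of_le' hn
  simp

theorem Fintype.card_subtype_fst_lt_snd (α : Type*) [Fintype α] [LinearOrder α] :
    Fintype.card {p : α × α // p.1 < p.2} = (Fintype.card α).choose 2 := by
  rw [Fintype.card_subtype, Fintype.card_product_filter_lt]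

/-- The double subdivision of `K n` (`n ≥ 2`) has gap 0, i.e.
`stp = n + 2 * C(n,2)`, the number of its vertices. -/
theorem stmt_15 (n : ℕ) (hn : 2 ≤ n) :
    (subdivKn n).gap = 0 ∧ (subdivKn n).stp = n + 2 * n.choose 2 := by
  have hcard : Fintype.card (Fin n ⊕ ({p : Fin n × Fin n // p.1 < p.2} × Fin 2)) =
      n + 2 * n.choose 2 := by
    simp [Fintype.card_subtype_fst_lt_snd, mul_comm]
  have hstp : (subdivKn n).stp = n + 2 * n.choose 2 :=
    hcard ▸ zeta.stp_eq_card (finRotate n).injective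
      fun v => zeta.exists_endpoint_eq_of_ne (finRotate_ne_self hn v).symm
  exact ⟨by rw [gap, hstp, hcard, Nat.sub_self], hstp⟩
end

section
/- Let K_{m,n} (m ≥ n ≥ 1) be the complete bipartite graph, and let G_{m,n} be obtained from it by subdividing each edge twice. Then gap(G_{m,n}) = m − n. -/
open LoopGraph

/-- The graph obtained from the complete bipartite graph `K m n` by
subdividing every edge twice. -/
def subdivKmn (m n : ℕ) :
    LoopGraph ((Fin m ⊕ Fin n) ⊕ ((Fin m × Fin n) × Fin 2)) :=
  zeta fun e => ((Sum.inl e.1 : Fin m ⊕ Fin n), (Sum.inr e.2 : Fin m ⊕ Fin n))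

open Finset

namespace Stmt16

variable {m n : ℕ}

abbrev VT (m n : ℕ) := (Fin m ⊕ Fin n) ⊕ ((Fin m × Fin n) × Fin 2)

def uu (i : Fin m) : VT m n := Sum.inl (Sum.inl i)
def vv (j : Fin n) : VT m n := Sum.inl (Sum.inr j)
def xx (e : Fin m × Fin n) (k : Fin 2) : VT m n := Sum.inr (e, k)

lemma uu_ne_vv (i : Fin m) (j : Fin n) : (uu i : VT m n) ≠ vv j := by simp [uu, vv]
lemma uu_ne_xx (i : Fin m) (e : Fin m × Fin n) (k : Fin 2) : (uu i : VT m n) ≠ xx e k := by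
  simp [uu, xx]
lemma vv_ne_xx (j : Fin n) (e : Fin m × Fin n) (k : Fin 2) : (vv j : VT m n) ≠ xx e k := by
  simp [vv, xx]
lemma xx_inj {e f : Fin m × Fin n} {k l : Fin 2} (h : (xx e k : VT m n) = xx f l) :
    e = f ∧ k = l := by simpa [xx, Prod.ext_iff] using h
lemma uu_inj {i i' : Fin m} (h : (uu i : VT m n) = uu i') : i = i' := by simpa [uu] using h
lemma vv_inj {j j' : Fin n} (h : (vv j : VT m n) = vv j') : j = j' := by simpa [vv] using h

lemma adj_xx0 (e : Fin m × Fin n) (w : VT m n) :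
    (subdivKmn m n).Adj w (xx e 0) ↔ w = uu e.1 ∨ w = xx e 1 := by
  constructor
  · intro h
    rcases h with (⟨f, ⟨hw, hx⟩ | ⟨hx, hw⟩⟩ | ⟨f, ⟨hw, hx⟩ | ⟨hx, hw⟩⟩ | ⟨f, ⟨hw, hx⟩ | ⟨hx, hw⟩⟩) <;>
      simp_all [uu, vv, xx, Prod.ext_iff]
  · rintro (rfl | rfl)
    · exact Or.inl ⟨e, Or.inl ⟨rfl, rfl⟩⟩
    · exact Or.inr (Or.inl ⟨e, Or.inr ⟨rfl, rfl⟩⟩)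

lemma adj_xx1 (e : Fin m × Fin n) (w : VT m n) :
    (subdivKmn m n).Adj w (xx e 1) ↔ w = xx e 0 ∨ w = vv e.2 := by
  constructor
  · intro h
    rcases h with (⟨f, ⟨hw, hx⟩ | ⟨hx, hw⟩⟩ | ⟨f, ⟨hw, hx⟩ | ⟨hx, hw⟩⟩ | ⟨f, ⟨hw, hx⟩ | ⟨hx, hw⟩⟩) <;>
      simp_all [uu, vv, xx, Prod.ext_iff]
  · rintro (rfl | rfl)
    · exact Or.inr (Or.inl ⟨e, Or.inl ⟨rfl, rfl⟩⟩)
    · exact Or.inr (Or.inr ⟨e, Or.inl ⟨rfl, rfl⟩⟩)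

lemma adj_uu (i : Fin m) (w : VT m n) :
    (subdivKmn m n).Adj (uu i) w ↔ ∃ j : Fin n, w = xx (i, j) 0 := by
  constructor
  · intro h
    rcases h with (⟨f, ⟨hw, hx⟩ | ⟨hx, hw⟩⟩ | ⟨f, ⟨hw, hx⟩ | ⟨hx, hw⟩⟩ | ⟨f, ⟨hw, hx⟩ | ⟨hx, hw⟩⟩) <;>
      simp_all [uu, vv, xx, Prod.ext_iff]
  · rintro ⟨j, rfl⟩
    exact Or.inl ⟨(i, j), Or.inl ⟨rfl, rfl⟩⟩

lemma adj_vv (j : Fin n) (w : VT m n) :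
    (subdivKmn m n).Adj (vv j) w ↔ ∃ i : Fin m, w = xx (i, j) 1 := by
  constructor
  · intro h
    rcases h with (⟨f, ⟨hw, hx⟩ | ⟨hx, hw⟩⟩ | ⟨f, ⟨hw, hx⟩ | ⟨hx, hw⟩⟩ | ⟨f, ⟨hw, hx⟩ | ⟨hx, hw⟩⟩) <;>
      simp_all [uu, vv, xx, Prod.ext_iff]
  · rintro ⟨i, rfl⟩
    exact Or.inr (Or.inr ⟨(i, j), Or.inl ⟨rfl, rfl⟩⟩)

lemma adj_mid (e : Fin m × Fin n) : (subdivKmn m n).Adj (xx e 0) (xx e 1) :=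
  Or.inr (Or.inl ⟨e, Or.inl ⟨rfl, rfl⟩⟩)

lemma adj_u_x0 (e : Fin m × Fin n) : (subdivKmn m n).Adj (uu e.1) (xx e 0) :=
  Or.inl ⟨e, Or.inl ⟨rfl, rfl⟩⟩

lemma adj_v_x1 (e : Fin m × Fin n) : (subdivKmn m n).Adj (vv e.2) (xx e 1) :=
  Or.inr (Or.inr ⟨e, Or.inl ⟨rfl, rfl⟩⟩)

end Stmt16

namespace Stmt16

variable {m n : ℕ} {C : Finset (Finset (VT m n) × Finset (VT m n))}

lemma eq_single {α : Type*} [DecidableEq α] {K : Finset α} {a : α} (ha : a ∈ K)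
    (h : ∀ c ∈ K, c = a) : K = {a} :=
  Finset.eq_singleton_iff_unique_mem.mpr ⟨ha, h⟩

lemma subset_pair {α : Type*} [DecidableEq α] {K : Finset α} {a b : α} (ha : a ∈ K)
    (hsub : ∀ c ∈ K, c = a ∨ c = b) : K = {a} ∨ K = {a, b} := by
  by_cases hb : b ∈ K
  · right
    apply Finset.Subset.antisymm
    · intro c hc
      rcases hsub c hc with rfl | rfl <;> simp
    · intro c hc
      rcases Finset.mem_insert.mp hc with rfl | hc
      · exact ha
      · rwa [Finset.mem_singleton.mp hc]
  · left
    refine eq_single ha fun c hc => ?_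
    rcases hsub c hc with rfl | rfl
    · rfl
    · exact absurd hc hb

lemma biclique (hC : (subdivKmn m n).IsCover C) {p} (hp : p ∈ C) {a b}
    (ha : a ∈ p.1) (hb : b ∈ p.2) : (subdivKmn m n).Adj a b :=
  (hC.2 a b).2 ⟨p, hp, Or.inl ⟨ha, hb⟩⟩

lemma exists_comp (hC : (subdivKmn m n).IsCover C) {a b : VT m n}
    (hab : (subdivKmn m n).Adj a b) :
    ∃ K L : Finset (VT m n), K ∈ sjComponents C ∧ L ∈ sjComponents C ∧ a ∈ K ∧ b ∈ L ∧
      ∀ a' ∈ K, ∀ b' ∈ L, (subdivKmn m n).Adj a' b' := by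
  obtain ⟨p, hp, h | h⟩ := (hC.2 a b).1 hab
  · exact ⟨p.1, p.2, Finset.mem_union_left _ (Finset.mem_image_of_mem _ hp),
      Finset.mem_union_right _ (Finset.mem_image_of_mem _ hp), h.1, h.2,
      fun a' ha' b' hb' => biclique hC hp ha' hb'⟩
  · exact ⟨p.2, p.1, Finset.mem_union_right _ (Finset.mem_image_of_mem _ hp),
      Finset.mem_union_left _ (Finset.mem_image_of_mem _ hp), h.1, h.2,
      fun a' ha' b' hb' => (subdivKmn m n).symm _ _ (biclique hC hp hb' ha')⟩

def X0 (m n : ℕ) (i : Fin m) : Finset (VT m n) := Finset.univ.image fun j => xx (i, j) 0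
def X1 (m n : ℕ) (j : Fin n) : Finset (VT m n) := Finset.univ.image fun i => xx (i, j) 1

lemma con1 (hC : (subdivKmn m n).IsCover C) (e : Fin m × Fin n) :
    ({xx e 0, vv e.2} : Finset (VT m n)) ∈ sjComponents C ∨
      ({xx e 0} : Finset (VT m n)) ∈ sjComponents C := by
  obtain ⟨K, L, hK, hL, haK, hbL, hadj⟩ := exists_comp hC (adj_mid e)
  have hsub : ∀ c ∈ K, c = xx e 0 ∨ c = vv e.2 := fun c hc =>
    (adj_xx1 e c).1 (hadj c hc _ hbL)
  rcases subset_pair haK hsub with h | h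
  · exact Or.inr (h ▸ hK)
  · exact Or.inl (h ▸ hK)

lemma con2 (hC : (subdivKmn m n).IsCover C) (e : Fin m × Fin n) :
    ({uu e.1, xx e 1} : Finset (VT m n)) ∈ sjComponents C ∨
      ({xx e 1} : Finset (VT m n)) ∈ sjComponents C := by
  obtain ⟨K, L, hK, hL, haK, hbL, hadj⟩ := exists_comp hC (adj_mid e)
  have hsub : ∀ c ∈ L, c = xx e 1 ∨ c = uu e.1 := by
    intro c hc
    rcases (adj_xx0 e c).1 ((subdivKmn m n).symm _ _ (hadj _ haK c hc)) with h | h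
    · exact Or.inr h
    · exact Or.inl h
  rcases subset_pair hbL hsub with h | h
  · exact Or.inr (h ▸ hL)
  · left
    rw [Finset.pair_comm (xx e 1) (uu e.1)] at h
    exact h ▸ hL

lemma con3 (hC : (subdivKmn m n).IsCover C) (e : Fin m × Fin n) :
    (({uu e.1} : Finset (VT m n)) ∈ sjComponents C ∧
      (({xx e 0} : Finset (VT m n)) ∈ sjComponents C ∨
        ∃ K ∈ sjComponents C, K ⊆ X0 m n e.1 ∧ 2 ≤ K.card)) ∨
    (({uu e.1, xx e 1} : Finset (VT m n)) ∈ sjComponents C ∧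
      ({xx e 0} : Finset (VT m n)) ∈ sjComponents C) := by
  obtain ⟨K, L, hK, hL, haK, hbL, hadj⟩ := exists_comp hC (adj_u_x0 e)
  have hsub : ∀ c ∈ K, c = uu e.1 ∨ c = xx e 1 := fun c hc =>
    (adj_xx0 e c).1 (hadj c hc _ hbL)
  have hLX : ∀ c ∈ L, ∃ j, c = xx (e.1, j) 0 := fun c hc =>
    (adj_uu e.1 c).1 (hadj _ haK c hc)
  rcases subset_pair haK hsub with h | h
  · -- K = {uu e.1}
    left
    refine ⟨h ▸ hK, ?_⟩
    by_cases hcard : 2 ≤ L.card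
    · refine Or.inr ⟨L, hL, ?_, hcard⟩
      intro c hc
      obtain ⟨j, rfl⟩ := hLX c hc
      exact Finset.mem_image_of_mem _ (Finset.mem_univ j)
    · refine Or.inl ?_
      have : L = {xx e 0} := eq_single hbL fun c hc => by
        obtain ⟨j, rfl⟩ := hLX c hc
        have h2 : ∀ d ∈ L, d = xx (e.1, j) 0 := by
          intro d hd
          obtain ⟨j', rfl⟩ := hLX d hd
          have := Finset.card_le_one.mp (by omega) _ hd _ hc
          exact this
        have := h2 _ hbL
        rw [← this]
      exact this ▸ hL
  · -- K = {uu e.1, xx e 1}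
    right
    refine ⟨h ▸ hK, ?_⟩
    have hx1K : xx e 1 ∈ K := by rw [h]; simp
    have : L = {xx e 0} := eq_single hbL fun c hc => by
      rcases (adj_xx1 e c).1 ((subdivKmn m n).symm _ _ (hadj _ hx1K c hc)) with h' | h'
      · exact h'
      · obtain ⟨j, hj⟩ := hLX c hc
        rw [hj] at h'
        exact absurd h'.symm (vv_ne_xx _ _ _)
    exact this ▸ hL

lemma con4 (hC : (subdivKmn m n).IsCover C) (e : Fin m × Fin n) :
    (({vv e.2} : Finset (VT m n)) ∈ sjComponents C ∧
      (({xx e 1} : Finset (VT m n)) ∈ sjComponents C ∨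
        ∃ K ∈ sjComponents C, K ⊆ X1 m n e.2 ∧ 2 ≤ K.card)) ∨
    (({xx e 0, vv e.2} : Finset (VT m n)) ∈ sjComponents C ∧
      ({xx e 1} : Finset (VT m n)) ∈ sjComponents C) := by
  obtain ⟨K, L, hK, hL, haK, hbL, hadj⟩ := exists_comp hC (adj_v_x1 e)
  have hsub : ∀ c ∈ K, c = vv e.2 ∨ c = xx e 0 := by
    intro c hc
    rcases (adj_xx1 e c).1 (hadj c hc _ hbL) with h | h
    · exact Or.inr h
    · exact Or.inl h
  have hLX : ∀ c ∈ L, ∃ i, c = xx (i, e.2) 1 := fun c hc =>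
    (adj_vv e.2 c).1 (hadj _ haK c hc)
  rcases subset_pair haK hsub with h | h
  · left
    refine ⟨h ▸ hK, ?_⟩
    by_cases hcard : 2 ≤ L.card
    · refine Or.inr ⟨L, hL, ?_, hcard⟩
      intro c hc
      obtain ⟨i, rfl⟩ := hLX c hc
      exact Finset.mem_image_of_mem _ (Finset.mem_univ i)
    · refine Or.inl ?_
      have : L = {xx e 1} := eq_single hbL fun c hc => by
        obtain ⟨i, rfl⟩ := hLX c hc
        have h2 := Finset.card_le_one.mp (by omega) _ hc _ hbL
        exact h2
      exact this ▸ hL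
  · right
    rw [Finset.pair_comm (vv e.2) (xx e 0)] at h
    constructor
    · exact h ▸ hK
    · have hx0K : xx e 0 ∈ K := by rw [h]; simp
      have : L = {xx e 1} := eq_single hbL fun c hc => by
        rcases (adj_xx0 e c).1 ((subdivKmn m n).symm _ _ (hadj _ hx0K c hc)) with h' | h'
        · obtain ⟨i, hi⟩ := hLX c hc
          rw [hi] at h'
          exact absurd h'.symm (uu_ne_xx _ _ _)
        · exact h'
      exact this ▸ hL

end Stmt16

namespace Stmt16

lemma sum_ge_two {m : ℕ} {f : Fin m → ℕ} (h2 : ∀ i, 2 ≤ f i) : 2 * m ≤ ∑ i, f i := by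
  have := Finset.card_nsmul_le_sum Finset.univ f 2 (fun i _ => h2 i)
  rwa [Finset.card_univ, Fintype.card_fin, smul_eq_mul, Nat.mul_comm] at this

lemma sum_split {m : ℕ} {f : Fin m → ℕ} (h2 : ∀ i, 2 ≤ f i) {i0 : Fin m} {k : ℕ}
    (hk : k ≤ f i0) : 2 * (m - 1) + k ≤ ∑ i, f i := by
  rw [← Finset.sum_erase_add _ _ (Finset.mem_univ i0)]
  have h1 : 2 * (m - 1) ≤ ∑ i ∈ Finset.univ.erase i0, f i := by
    have := Finset.card_nsmul_le_sum (Finset.univ.erase i0) f 2 (fun i _ => h2 i)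
    rwa [Finset.card_erase_of_mem (Finset.mem_univ i0), Finset.card_univ, Fintype.card_fin,
      smul_eq_mul, Nat.mul_comm] at this
  omega

def colsum {m n : ℕ} (a s b t : Fin m × Fin n → ℕ) (nu b1 : Fin n → ℕ) (j : Fin n) : ℕ :=
  (∑ i, (a (i, j) + s (i, j) + b (i, j) + t (i, j))) + nu j + b1 j

lemma core {m n : ℕ} (hmn : n ≤ m) (hn : 1 ≤ n)
    (a s b t : Fin m × Fin n → ℕ) (mu b0 : Fin m → ℕ) (nu b1 : Fin n → ℕ)
    (h1 : ∀ e, 1 ≤ a e + s e) (h2 : ∀ e, 1 ≤ b e + t e)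
    (h3 : ∀ e, (1 ≤ mu e.1 ∧ 1 ≤ s e + b0 e.1) ∨ (1 ≤ b e ∧ 1 ≤ s e))
    (h4 : ∀ e, (1 ≤ nu e.2 ∧ 1 ≤ t e + b1 e.2) ∨ (1 ≤ a e ∧ 1 ≤ t e)) :
    2*m*n + 2*n ≤ (∑ e, a e) + (∑ e, s e) + (∑ e, b e) + (∑ e, t e)
      + (∑ i, mu i) + (∑ i, b0 i) + (∑ j, nu j) + (∑ j, b1 j) := by
  classical
  set B0 := ∑ i, b0 i with hB0
  -- total identity
  have hTot : ∑ j, colsum a s b t nu b1 j =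
      (∑ e, a e) + (∑ e, s e) + (∑ e, b e) + (∑ e, t e) + (∑ j, nu j) + (∑ j, b1 j) := by
    simp only [colsum, Finset.sum_add_distrib, Fintype.sum_prod_type_right]
  -- pointwise baseline
  have hF2 : ∀ e : Fin m × Fin n, 2 ≤ a e + s e + b e + t e := by
    intro e; have := h1 e; have := h2 e; omega
  -- column dichotomy
  have hcol : ∀ j, 2*m + 2 ≤ colsum a s b t nu b1 j ∨
      ((∀ i, 1 ≤ mu i) ∧
        2*m + (if 1 ≤ nu j then 1 else m - B0) ≤ colsum a s b t nu b1 j) := by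
    intro j
    by_cases hg : 2*m + 2 ≤ colsum a s b t nu b1 j
    · exact Or.inl hg
    right
    have hm1 : 1 ≤ m := le_trans hn hmn
    have hsum2m : 2*m ≤ ∑ i, (a (i, j) + s (i, j) + b (i, j) + t (i, j)) :=
      sum_ge_two (fun i => hF2 (i, j))
    by_cases hnu : 1 ≤ nu j
    · have hb1 : b1 j = 0 := by
        by_contra hb
        exact hg (by unfold colsum; omega)
      have hta : ∀ i, 1 ≤ t (i, j) := by
        intro i
        rcases h4 (i, j) with ⟨_, h⟩ | ⟨_, h⟩
        · simpa [hb1] using h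
        · exact h
      have hnb : ∀ i, ¬(1 ≤ b (i, j) ∧ 1 ≤ s (i, j)) := by
        rintro i ⟨hbb, hss⟩
        have h3F : 3 ≤ a (i, j) + s (i, j) + b (i, j) + t (i, j) := by
          have := hta i; omega
        have hs3 : 2*(m-1) + 3 ≤ ∑ i, (a (i, j) + s (i, j) + b (i, j) + t (i, j)) :=
          sum_split (fun i => hF2 (i, j)) h3F
        exact hg (by unfold colsum; omega)
      have hmub : ∀ i, 1 ≤ mu i ∧ 1 ≤ s (i, j) + b0 i :=
        fun i => (h3 (i, j)).resolve_right (hnb i)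
      refine ⟨fun i => (hmub i).1, ?_⟩
      rw [if_pos hnu]
      unfold colsum; omega
    · have hat : ∀ i, 1 ≤ a (i, j) ∧ 1 ≤ t (i, j) := by
        intro i
        refine (h4 (i, j)).resolve_left ?_
        rintro ⟨h, _⟩; exact hnu h
      have hnb : ∀ i, ¬(1 ≤ b (i, j) ∧ 1 ≤ s (i, j)) := by
        rintro i ⟨hbb, hss⟩
        have h4F : 4 ≤ a (i, j) + s (i, j) + b (i, j) + t (i, j) := by
          have := hat i; omega
        have hs4 : 2*(m-1) + 4 ≤ ∑ i, (a (i, j) + s (i, j) + b (i, j) + t (i, j)) :=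
          sum_split (fun i => hF2 (i, j)) h4F
        exact hg (by unfold colsum; omega)
      have hmub : ∀ i, 1 ≤ mu i ∧ 1 ≤ s (i, j) + b0 i :=
        fun i => (h3 (i, j)).resolve_right (hnb i)
      refine ⟨fun i => (hmub i).1, ?_⟩
      rw [if_neg hnu]
      -- c j ≥ 2m + (m - B0)
      have hps : ∀ i, 2 + s (i, j) ≤ a (i, j) + s (i, j) + b (i, j) + t (i, j) := by
        intro i; have := hat i; omega
      have hsS : 2*m + ∑ i, s (i, j) ≤ ∑ i, (a (i, j) + s (i, j) + b (i, j) + t (i, j)) := by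
        calc 2*m + ∑ i, s (i, j) = ∑ i : Fin m, (2 + s (i, j)) := by
              rw [Finset.sum_add_distrib]
              simp [Finset.sum_const, Finset.card_univ, Nat.mul_comm]
        _ ≤ _ := Finset.sum_le_sum (fun i _ => hps i)
      have hmS : m ≤ (∑ i, s (i, j)) + B0 := by
        have : m • 1 ≤ ∑ i : Fin m, (s (i, j) + b0 i) := by
          have := Finset.card_nsmul_le_sum Finset.univ (fun i => s (i, j) + b0 i) 1
            (fun i _ => (hmub i).2)
          simpa using this
        rw [Finset.sum_add_distrib] at this
        simpa using this
      unfold colsum; omega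
  -- global assembly
  set c := colsum a s b t nu b1 with hc
  set Good := Finset.univ.filter (fun j => 2*m + 2 ≤ c j) with hGoodDef
  set Bad := Finset.univ.filter (fun j => ¬ (2*m + 2 ≤ c j)) with hBadDef
  have hsplit : (∑ j ∈ Good, c j) + (∑ j ∈ Bad, c j) = ∑ j, c j :=
    Finset.sum_filter_add_sum_filter_not _ _ _
  have hGoodLB : Good.card * (2*m+2) ≤ ∑ j ∈ Good, c j := by
    have := Finset.card_nsmul_le_sum Good c (2*m+2) (fun j hj => (Finset.mem_filter.mp hj).2)
    simpa [smul_eq_mul] using this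
  have hcards : Good.card + Bad.card = n := by
    have := Finset.card_filter_add_card_filter_not (s := (Finset.univ : Finset (Fin n)))
      (p := fun j => 2*m + 2 ≤ c j)
    simpa [hGoodDef, hBadDef] using this
  by_cases hB : Bad = ∅
  · have hGcard : Good.card = n := by
      rw [hB] at hcards; simpa using hcards
    have hmain : 2*m*n + 2*n ≤ ∑ j, c j := by
      have h1 := hGoodLB
      rw [hGcard] at h1
      have h2 : n * (2*m+2) = 2*m*n + 2*n := by ring
      rw [hB] at hsplit
      simp at hsplit
      omega
    have hx : ∑ j, c j = (∑ e, a e) + (∑ e, s e) + (∑ e, b e) + (∑ e, t e)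
        + (∑ j, nu j) + (∑ j, b1 j) := hTot
    omega
  · obtain ⟨j0, hj0⟩ := Finset.nonempty_of_ne_empty hB
    have hj0' : ¬ (2*m+2 ≤ c j0) := (Finset.mem_filter.mp hj0).2
    have hmu : ∀ i, 1 ≤ mu i := ((hcol j0).resolve_left hj0').1
    have hmuS : m ≤ ∑ i, mu i := by
      have := Finset.card_nsmul_le_sum Finset.univ mu 1 (fun i _ => hmu i)
      simpa using this
    set Bnu := Bad.filter (fun j => 1 ≤ nu j) with hBnuDef
    set Bnn := Bad.filter (fun j => ¬ 1 ≤ nu j) with hBnnDef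
    have hBsplit : (∑ j ∈ Bnu, c j) + (∑ j ∈ Bnn, c j) = ∑ j ∈ Bad, c j :=
      Finset.sum_filter_add_sum_filter_not _ _ _
    have hBcards : Bnu.card + Bnn.card = Bad.card := by
      have := Finset.card_filter_add_card_filter_not (s := Bad)
        (p := fun j => 1 ≤ nu j)
      simpa [hBnuDef, hBnnDef] using this
    have hBnuLB : Bnu.card * (2*m+1) ≤ ∑ j ∈ Bnu, c j := by
      have := Finset.card_nsmul_le_sum Bnu c (2*m+1) (fun j hj => by
        have hjB : j ∈ Bad := (Finset.mem_filter.mp hj).1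
        have hjn : 1 ≤ nu j := (Finset.mem_filter.mp hj).2
        have := ((hcol j).resolve_left (Finset.mem_filter.mp hjB).2).2
        rwa [if_pos hjn] at this)
      simpa [smul_eq_mul] using this
    have hBnnLB : Bnn.card * (2*m + (m - B0)) ≤ ∑ j ∈ Bnn, c j := by
      have := Finset.card_nsmul_le_sum Bnn c (2*m + (m - B0)) (fun j hj => by
        have hjB : j ∈ Bad := (Finset.mem_filter.mp hj).1
        have hjn : ¬ 1 ≤ nu j := (Finset.mem_filter.mp hj).2
        have := ((hcol j).resolve_left (Finset.mem_filter.mp hjB).2).2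
        rwa [if_neg hjn] at this)
      simpa [smul_eq_mul] using this
    have hkm : Bnu.card + Bnn.card ≤ m := by omega
    have hkey : 2*Bnn.card + Bnu.card ≤ Bnn.card*(m - B0) + m + B0 := by
      rcases Nat.lt_or_ge B0 m with h | h
      · have h1 : Bnn.card ≤ Bnn.card * (m - B0) :=
          Nat.le_mul_of_pos_right _ (by omega)
        omega
      · have h0 : m - B0 = 0 := by omega
        rw [h0, Nat.mul_zero]
        omega
    have hg : Good.card + Bnn.card + Bnu.card = n := by omega
    have hfin : 2*m*n + 2*n ≤ Good.card*(2*m+2) + Bnu.card*(2*m+1)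
        + Bnn.card*(2*m + (m - B0)) + m + B0 := by
      have e5 : m*n = m*Good.card + m*Bnn.card + m*Bnu.card := by
        have h' : m*(Good.card + Bnn.card + Bnu.card) = m*Good.card + m*Bnn.card + m*Bnu.card := by
          ring
        rw [← h', hg]
      linarith [hkey, hg, e5]
    have hx : ∑ j, c j = (∑ e, a e) + (∑ e, s e) + (∑ e, b e) + (∑ e, t e)
        + (∑ j, nu j) + (∑ j, b1 j) := hTot
    omega

end Stmt16

namespace Stmt16

variable {m n : ℕ}

open Classical in
noncomputable def sig (K : Finset (VT m n)) : ℕ :=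
  (if ∃ i, uu i ∈ K then 1 else 0) + 2 * (if ∃ j, vv j ∈ K then 1 else 0)
  + 4 * (if ∃ e, xx e 0 ∈ K then 1 else 0) + 8 * (if ∃ e, xx e 1 ∈ K then 1 else 0)
  + 16 * (if 2 ≤ K.card then 1 else 0)

lemma sig_A (e : Fin m × Fin n) : sig ({xx e 0, vv e.2} : Finset (VT m n)) = 22 := by
  have hc : ({xx e 0, vv e.2} : Finset (VT m n)).card = 2 :=
    Finset.card_pair (by simp [xx, vv])
  simp [sig, uu, vv, xx, hc, Prod.ext_iff]

lemma sig_S (e : Fin m × Fin n) : sig ({xx e 0} : Finset (VT m n)) = 4 := by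
  simp [sig, uu, vv, xx, Prod.ext_iff]

lemma sig_B (e : Fin m × Fin n) : sig ({uu e.1, xx e 1} : Finset (VT m n)) = 25 := by
  have hc : ({uu e.1, xx e 1} : Finset (VT m n)).card = 2 :=
    Finset.card_pair (by simp [xx, uu])
  simp [sig, uu, vv, xx, hc, Prod.ext_iff]

lemma sig_T (e : Fin m × Fin n) : sig ({xx e 1} : Finset (VT m n)) = 8 := by
  simp [sig, uu, vv, xx, Prod.ext_iff]

lemma sig_M (i : Fin m) : sig ({uu i} : Finset (VT m n)) = 1 := by
  simp [sig, uu, vv, xx]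

lemma sig_N (j : Fin n) : sig ({vv j} : Finset (VT m n)) = 2 := by
  simp [sig, uu, vv, xx]

lemma sig_X0 {K : Finset (VT m n)} (h : ∃ i, K ⊆ X0 m n i ∧ 2 ≤ K.card) : sig K = 20 := by
  obtain ⟨i, hsub, hcard⟩ := h
  have hmem : ∀ c ∈ K, ∃ j, c = xx (i, j) 0 := by
    intro c hc
    obtain ⟨j, _, hj⟩ := Finset.mem_image.mp (hsub hc)
    exact ⟨j, hj.symm⟩
  obtain ⟨a, ha⟩ := Finset.card_pos.mp (lt_of_lt_of_le Nat.zero_lt_two hcard)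
  obtain ⟨j, rfl⟩ := hmem a ha
  have h1 : ¬ ∃ i', (uu i' : VT m n) ∈ K := by
    rintro ⟨i', hi'⟩
    obtain ⟨j', hj'⟩ := hmem _ hi'
    exact (uu_ne_xx i' (i, j') 0) hj'
  have h2 : ¬ ∃ j', (vv j' : VT m n) ∈ K := by
    rintro ⟨j', hj'⟩
    obtain ⟨j'', hj''⟩ := hmem _ hj'
    exact (vv_ne_xx j' (i, j'') 0) hj''
  have h3 : ∃ e, (xx e 0 : VT m n) ∈ K := ⟨(i, j), ha⟩
  have h4 : ¬ ∃ e, (xx e 1 : VT m n) ∈ K := by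
    rintro ⟨e, he⟩
    obtain ⟨j', hj'⟩ := hmem _ he
    exact absurd (xx_inj hj').2 (by decide)
  simp [sig, h1, h2, h3, h4, hcard]

lemma sig_X1 {K : Finset (VT m n)} (h : ∃ j, K ⊆ X1 m n j ∧ 2 ≤ K.card) : sig K = 24 := by
  obtain ⟨j, hsub, hcard⟩ := h
  have hmem : ∀ c ∈ K, ∃ i, c = xx (i, j) 1 := by
    intro c hc
    obtain ⟨i, _, hi⟩ := Finset.mem_image.mp (hsub hc)
    exact ⟨i, hi.symm⟩
  obtain ⟨a, ha⟩ := Finset.card_pos.mp (lt_of_lt_of_le Nat.zero_lt_two hcard)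
  obtain ⟨i, rfl⟩ := hmem a ha
  have h1 : ¬ ∃ i', (uu i' : VT m n) ∈ K := by
    rintro ⟨i', hi'⟩
    obtain ⟨i'', hi''⟩ := hmem _ hi'
    exact (uu_ne_xx i' (i'', j) 1) hi''
  have h2 : ¬ ∃ j', (vv j' : VT m n) ∈ K := by
    rintro ⟨j', hj'⟩
    obtain ⟨i'', hi''⟩ := hmem _ hj'
    exact (vv_ne_xx j' (i'', j) 1) hi''
  have h3 : ¬ ∃ e, (xx e 0 : VT m n) ∈ K := by
    rintro ⟨e, he⟩
    obtain ⟨i', hi'⟩ := hmem _ he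
    exact absurd (xx_inj hi').2 (by decide)
  have h4 : ∃ e, (xx e 1 : VT m n) ∈ K := ⟨(i, j), ha⟩
  simp [sig, h1, h2, h3, h4, hcard]

lemma disj_of_sig {A B : Finset (Finset (VT m n))} {p q : ℕ}
    (hp : ∀ K ∈ A, sig K = p) (hq : ∀ K ∈ B, sig K = q) (hpq : p ≠ q) :
    Disjoint A B :=
  Finset.disjoint_left.mpr fun K hA hB => hpq ((hp K hA).symm.trans (hq K hB))

end Stmt16

namespace Stmt16

variable {m n : ℕ} {C : Finset (Finset (VT m n) × Finset (VT m n))}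

lemma injA : Function.Injective
    (fun e : Fin m × Fin n => ({xx e 0, vv e.2} : Finset (VT m n))) := by
  intro e e' h
  have h0 : ({xx e 0, vv e.2} : Finset (VT m n)) = {xx e' 0, vv e'.2} := h
  have hm : (xx e 0 : VT m n) ∈ ({xx e' 0, vv e'.2} : Finset (VT m n)) := by
    rw [← h0]; exact Finset.mem_insert_self _ _
  rcases Finset.mem_insert.mp hm with h' | h'
  · exact (xx_inj h').1
  · exact ((vv_ne_xx _ _ _) (Finset.mem_singleton.mp h').symm).elim

lemma injB : Function.Injective
    (fun e : Fin m × Fin n => ({uu e.1, xx e 1} : Finset (VT m n))) := by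
  intro e e' h
  have h0 : ({uu e.1, xx e 1} : Finset (VT m n)) = {uu e'.1, xx e' 1} := h
  have hm : (xx e 1 : VT m n) ∈ ({uu e'.1, xx e' 1} : Finset (VT m n)) := by
    rw [← h0]; exact Finset.mem_insert.mpr (Or.inr (Finset.mem_singleton_self _))
  rcases Finset.mem_insert.mp hm with h' | h'
  · exact ((uu_ne_xx _ _ _) h'.symm).elim
  · exact (xx_inj (Finset.mem_singleton.mp h')).1

lemma injS (k : Fin 2) : Function.Injective
    (fun e : Fin m × Fin n => ({xx e k} : Finset (VT m n))) := by
  intro e e' h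
  exact (xx_inj (Finset.singleton_injective h)).1

lemma injM : Function.Injective (fun i : Fin m => ({uu i} : Finset (VT m n))) := by
  intro i i' h
  exact uu_inj (Finset.singleton_injective h)

lemma injN : Function.Injective (fun j : Fin n => ({vv j} : Finset (VT m n))) := by
  intro j j' h
  exact vv_inj (Finset.singleton_injective h)

lemma lower (hmn : n ≤ m) (hn : 1 ≤ n) (hC : (subdivKmn m n).IsCover C) :
    2*m*n + 2*n ≤ (sjComponents C).card := by
  classical
  refine le_trans (core hmn hn
    (fun e => if ({xx e 0, vv e.2} : Finset (VT m n)) ∈ sjComponents C then 1 else 0)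
    (fun e => if ({xx e 0} : Finset (VT m n)) ∈ sjComponents C then 1 else 0)
    (fun e => if ({uu e.1, xx e 1} : Finset (VT m n)) ∈ sjComponents C then 1 else 0)
    (fun e => if ({xx e 1} : Finset (VT m n)) ∈ sjComponents C then 1 else 0)
    (fun i => if ({uu i} : Finset (VT m n)) ∈ sjComponents C then 1 else 0)
    (fun i => if (∃ K ∈ sjComponents C, K ⊆ X0 m n i ∧ 2 ≤ K.card) then 1 else 0)
    (fun j => if ({vv j} : Finset (VT m n)) ∈ sjComponents C then 1 else 0)
    (fun j => if (∃ K ∈ sjComponents C, K ⊆ X1 m n j ∧ 2 ≤ K.card) then 1 else 0)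
    ?_ ?_ ?_ ?_) ?_
  · intro e; rcases con1 hC e with h | h <;> simp [h]
  · intro e; rcases con2 hC e with h | h <;> simp [h]
  · intro e
    rcases con3 hC e with ⟨h1, h2 | h2⟩ | ⟨h1, h2⟩ <;> simp [h1, h2]
  · intro e
    rcases con4 hC e with ⟨h1, h2 | h2⟩ | ⟨h1, h2⟩ <;> simp [h1, h2]
  -- now the counting part
  simp only [← Finset.card_filter]
  set S := sjComponents C with hSdef
  set FA := (Finset.univ.filter
      (fun e : Fin m × Fin n => ({xx e 0, vv e.2} : Finset (VT m n)) ∈ S)).image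
      (fun e => ({xx e 0, vv e.2} : Finset (VT m n))) with hFA
  set FS := (Finset.univ.filter
      (fun e : Fin m × Fin n => ({xx e 0} : Finset (VT m n)) ∈ S)).image
      (fun e => ({xx e 0} : Finset (VT m n))) with hFS
  set FB := (Finset.univ.filter
      (fun e : Fin m × Fin n => ({uu e.1, xx e 1} : Finset (VT m n)) ∈ S)).image
      (fun e => ({uu e.1, xx e 1} : Finset (VT m n))) with hFB
  set FT := (Finset.univ.filter
      (fun e : Fin m × Fin n => ({xx e 1} : Finset (VT m n)) ∈ S)).image
      (fun e => ({xx e 1} : Finset (VT m n))) with hFT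
  set FM := (Finset.univ.filter
      (fun i : Fin m => ({uu i} : Finset (VT m n)) ∈ S)).image
      (fun i => ({uu i} : Finset (VT m n))) with hFM
  set FN := (Finset.univ.filter
      (fun j : Fin n => ({vv j} : Finset (VT m n)) ∈ S)).image
      (fun j => ({vv j} : Finset (VT m n))) with hFN
  set F0 := S.filter (fun K => ∃ i, K ⊆ X0 m n i ∧ 2 ≤ K.card) with hF0
  set F1 := S.filter (fun K => ∃ j, K ⊆ X1 m n j ∧ 2 ≤ K.card) with hF1
  have sFA : ∀ K ∈ FA, sig K = 22 := by
    intro K hK; obtain ⟨e, -, rfl⟩ := Finset.mem_image.mp hK; exact sig_A e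
  have sFS : ∀ K ∈ FS, sig K = 4 := by
    intro K hK; obtain ⟨e, -, rfl⟩ := Finset.mem_image.mp hK; exact sig_S e
  have sFB : ∀ K ∈ FB, sig K = 25 := by
    intro K hK; obtain ⟨e, -, rfl⟩ := Finset.mem_image.mp hK; exact sig_B e
  have sFT : ∀ K ∈ FT, sig K = 8 := by
    intro K hK; obtain ⟨e, -, rfl⟩ := Finset.mem_image.mp hK; exact sig_T e
  have sFM : ∀ K ∈ FM, sig K = 1 := by
    intro K hK; obtain ⟨i, -, rfl⟩ := Finset.mem_image.mp hK; exact sig_M i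
  have sFN : ∀ K ∈ FN, sig K = 2 := by
    intro K hK; obtain ⟨j, -, rfl⟩ := Finset.mem_image.mp hK; exact sig_N j
  have sF0 : ∀ K ∈ F0, sig K = 20 := fun K hK => sig_X0 (Finset.mem_filter.mp hK).2
  have sF1 : ∀ K ∈ F1, sig K = 24 := fun K hK => sig_X1 (Finset.mem_filter.mp hK).2
  have d_FA_FS : Disjoint FA FS := disj_of_sig sFA sFS (by norm_num)
  have d_FA_FB : Disjoint FA FB := disj_of_sig sFA sFB (by norm_num)
  have d_FA_FT : Disjoint FA FT := disj_of_sig sFA sFT (by norm_num)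
  have d_FA_FM : Disjoint FA FM := disj_of_sig sFA sFM (by norm_num)
  have d_FA_FN : Disjoint FA FN := disj_of_sig sFA sFN (by norm_num)
  have d_FA_F0 : Disjoint FA F0 := disj_of_sig sFA sF0 (by norm_num)
  have d_FA_F1 : Disjoint FA F1 := disj_of_sig sFA sF1 (by norm_num)
  have d_FS_FB : Disjoint FS FB := disj_of_sig sFS sFB (by norm_num)
  have d_FS_FT : Disjoint FS FT := disj_of_sig sFS sFT (by norm_num)
  have d_FS_FM : Disjoint FS FM := disj_of_sig sFS sFM (by norm_num)
  have d_FS_FN : Disjoint FS FN := disj_of_sig sFS sFN (by norm_num)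
  have d_FS_F0 : Disjoint FS F0 := disj_of_sig sFS sF0 (by norm_num)
  have d_FS_F1 : Disjoint FS F1 := disj_of_sig sFS sF1 (by norm_num)
  have d_FB_FT : Disjoint FB FT := disj_of_sig sFB sFT (by norm_num)
  have d_FB_FM : Disjoint FB FM := disj_of_sig sFB sFM (by norm_num)
  have d_FB_FN : Disjoint FB FN := disj_of_sig sFB sFN (by norm_num)
  have d_FB_F0 : Disjoint FB F0 := disj_of_sig sFB sF0 (by norm_num)
  have d_FB_F1 : Disjoint FB F1 := disj_of_sig sFB sF1 (by norm_num)
  have d_FT_FM : Disjoint FT FM := disj_of_sig sFT sFM (by norm_num)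
  have d_FT_FN : Disjoint FT FN := disj_of_sig sFT sFN (by norm_num)
  have d_FT_F0 : Disjoint FT F0 := disj_of_sig sFT sF0 (by norm_num)
  have d_FT_F1 : Disjoint FT F1 := disj_of_sig sFT sF1 (by norm_num)
  have d_FM_FN : Disjoint FM FN := disj_of_sig sFM sFN (by norm_num)
  have d_FM_F0 : Disjoint FM F0 := disj_of_sig sFM sF0 (by norm_num)
  have d_FM_F1 : Disjoint FM F1 := disj_of_sig sFM sF1 (by norm_num)
  have d_FN_F0 : Disjoint FN F0 := disj_of_sig sFN sF0 (by norm_num)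
  have d_FN_F1 : Disjoint FN F1 := disj_of_sig sFN sF1 (by norm_num)
  have d_F0_F1 : Disjoint F0 F1 := disj_of_sig sF0 sF1 (by norm_num)
  have D1 : Disjoint (FA) FS := d_FA_FS
  have D2 : Disjoint (FA ∪ FS) FB := (Finset.disjoint_union_left.mpr ⟨d_FA_FB, d_FS_FB⟩)
  have D3 : Disjoint (FA ∪ FS ∪ FB) FT := (Finset.disjoint_union_left.mpr ⟨(Finset.disjoint_union_left.mpr ⟨d_FA_FT, d_FS_FT⟩), d_FB_FT⟩)
  have D4 : Disjoint (FA ∪ FS ∪ FB ∪ FT) FM := (Finset.disjoint_union_left.mpr ⟨(Finset.disjoint_union_left.mpr ⟨(Finset.disjoint_union_left.mpr ⟨d_FA_FM, d_FS_FM⟩), d_FB_FM⟩), d_FT_FM⟩)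
  have D5 : Disjoint (FA ∪ FS ∪ FB ∪ FT ∪ FM) FN := (Finset.disjoint_union_left.mpr ⟨(Finset.disjoint_union_left.mpr ⟨(Finset.disjoint_union_left.mpr ⟨(Finset.disjoint_union_left.mpr ⟨d_FA_FN, d_FS_FN⟩), d_FB_FN⟩), d_FT_FN⟩), d_FM_FN⟩)
  have D6 : Disjoint (FA ∪ FS ∪ FB ∪ FT ∪ FM ∪ FN) F0 := (Finset.disjoint_union_left.mpr ⟨(Finset.disjoint_union_left.mpr ⟨(Finset.disjoint_union_left.mpr ⟨(Finset.disjoint_union_left.mpr ⟨(Finset.disjoint_union_left.mpr ⟨d_FA_F0, d_FS_F0⟩), d_FB_F0⟩), d_FT_F0⟩), d_FM_F0⟩), d_FN_F0⟩)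
  have D7 : Disjoint (FA ∪ FS ∪ FB ∪ FT ∪ FM ∪ FN ∪ F0) F1 := (Finset.disjoint_union_left.mpr ⟨(Finset.disjoint_union_left.mpr ⟨(Finset.disjoint_union_left.mpr ⟨(Finset.disjoint_union_left.mpr ⟨(Finset.disjoint_union_left.mpr ⟨(Finset.disjoint_union_left.mpr ⟨d_FA_F1, d_FS_F1⟩), d_FB_F1⟩), d_FT_F1⟩), d_FM_F1⟩), d_FN_F1⟩), d_F0_F1⟩)
  have hcardU : #(FA ∪ FS ∪ FB ∪ FT ∪ FM ∪ FN ∪ F0 ∪ F1) = #FA + #FS + #FB + #FT + #FM + #FN + #F0 + #F1 := by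
    rw [Finset.card_union_of_disjoint D7, Finset.card_union_of_disjoint D6, Finset.card_union_of_disjoint D5, Finset.card_union_of_disjoint D4, Finset.card_union_of_disjoint D3, Finset.card_union_of_disjoint D2, Finset.card_union_of_disjoint D1]
  have hsub : FA ∪ FS ∪ FB ∪ FT ∪ FM ∪ FN ∪ F0 ∪ F1 ⊆ S := by
    intro K hK
    simp only [Finset.mem_union] at hK
    rcases hK with ((((((hK | hK) | hK) | hK) | hK) | hK) | hK) | hK
    all_goals first
      | (obtain ⟨e, he, rfl⟩ := Finset.mem_image.mp hK; exact (Finset.mem_filter.mp he).2)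
      | exact (Finset.mem_filter.mp hK).1
  have hUS : #(FA ∪ FS ∪ FB ∪ FT ∪ FM ∪ FN ∪ F0 ∪ F1) ≤ #S := Finset.card_le_card hsub
  have cFA : #FA = #(Finset.univ.filter
      (fun e : Fin m × Fin n => ({xx e 0, vv e.2} : Finset (VT m n)) ∈ S)) :=
    Finset.card_image_of_injective _ injA
  have cFS : #FS = #(Finset.univ.filter
      (fun e : Fin m × Fin n => ({xx e 0} : Finset (VT m n)) ∈ S)) :=
    Finset.card_image_of_injective _ (injS 0)
  have cFB : #FB = #(Finset.univ.filter
      (fun e : Fin m × Fin n => ({uu e.1, xx e 1} : Finset (VT m n)) ∈ S)) :=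
    Finset.card_image_of_injective _ injB
  have cFT : #FT = #(Finset.univ.filter
      (fun e : Fin m × Fin n => ({xx e 1} : Finset (VT m n)) ∈ S)) :=
    Finset.card_image_of_injective _ (injS 1)
  have cFM : #FM = #(Finset.univ.filter (fun i : Fin m => ({uu i} : Finset (VT m n)) ∈ S)) :=
    Finset.card_image_of_injective _ injM
  have cFN : #FN = #(Finset.univ.filter (fun j : Fin n => ({vv j} : Finset (VT m n)) ∈ S)) :=
    Finset.card_image_of_injective _ injN
  have cF0 : #(Finset.univ.filter (fun i : Fin m => ∃ K ∈ S, K ⊆ X0 m n i ∧ 2 ≤ #K)) ≤ #F0 := by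
    apply Finset.card_le_card_of_injOn
      (fun i => if h : ∃ K ∈ S, K ⊆ X0 m n i ∧ 2 ≤ #K then h.choose else ∅)
    · intro i hi
      have hp := (Finset.mem_filter.mp hi).2
      simp only [Finset.mem_coe]
      rw [dif_pos hp]
      obtain ⟨hq1, hq2⟩ := hp.choose_spec
      exact Finset.mem_filter.mpr ⟨hq1, ⟨i, hq2⟩⟩
    · intro i hi i' hi' heq
      have hp := (Finset.mem_filter.mp (Finset.mem_coe.mp hi)).2
      have hp' := (Finset.mem_filter.mp (Finset.mem_coe.mp hi')).2
      simp only at heq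
      rw [dif_pos hp, dif_pos hp'] at heq
      obtain ⟨hq1, hq2, hq3⟩ := hp.choose_spec
      obtain ⟨hr1, hr2, hr3⟩ := hp'.choose_spec
      obtain ⟨c0, hc0⟩ := Finset.card_pos.mp (lt_of_lt_of_le Nat.zero_lt_two hq3)
      have hc1 := hq2 hc0
      have hc2 := hr2 (heq ▸ hc0)
      obtain ⟨j1, -, hj1⟩ := Finset.mem_image.mp hc1
      obtain ⟨j2, -, hj2⟩ := Finset.mem_image.mp hc2
      have := (xx_inj (hj1.trans hj2.symm)).1
      exact congrArg Prod.fst this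
  have cF1 : #(Finset.univ.filter (fun j : Fin n => ∃ K ∈ S, K ⊆ X1 m n j ∧ 2 ≤ #K)) ≤ #F1 := by
    apply Finset.card_le_card_of_injOn
      (fun j => if h : ∃ K ∈ S, K ⊆ X1 m n j ∧ 2 ≤ #K then h.choose else ∅)
    · intro j hj
      have hp := (Finset.mem_filter.mp hj).2
      simp only [Finset.mem_coe]
      rw [dif_pos hp]
      obtain ⟨hq1, hq2⟩ := hp.choose_spec
      exact Finset.mem_filter.mpr ⟨hq1, ⟨j, hq2⟩⟩
    · intro j hj j' hj' heq
      have hp := (Finset.mem_filter.mp (Finset.mem_coe.mp hj)).2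
      have hp' := (Finset.mem_filter.mp (Finset.mem_coe.mp hj')).2
      simp only at heq
      rw [dif_pos hp, dif_pos hp'] at heq
      obtain ⟨hq1, hq2, hq3⟩ := hp.choose_spec
      obtain ⟨hr1, hr2, hr3⟩ := hp'.choose_spec
      obtain ⟨c0, hc0⟩ := Finset.card_pos.mp (lt_of_lt_of_le Nat.zero_lt_two hq3)
      have hc1 := hq2 hc0
      have hc2 := hr2 (heq ▸ hc0)
      obtain ⟨i1, -, hi1⟩ := Finset.mem_image.mp hc1
      obtain ⟨i2, -, hi2⟩ := Finset.mem_image.mp hc2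
      have := (xx_inj (hi1.trans hi2.symm)).1
      exact congrArg Prod.snd this
  omega


end Stmt16

namespace Stmt16

variable {m n : ℕ}

def C0 (m n : ℕ) : Finset (Finset (VT m n) × Finset (VT m n)) :=
  (Finset.univ.image fun e : Fin m × Fin n =>
    (({uu e.1, xx e 1} : Finset (VT m n)), ({xx e 0} : Finset (VT m n)))) ∪
  (Finset.univ.image fun j : Fin n => (({vv j} : Finset (VT m n)), X1 m n j))

lemma isCover_C0 (hm : 1 ≤ m) : (subdivKmn m n).IsCover (C0 m n) := by
  constructor
  · intro p hp
    rcases Finset.mem_union.mp hp with h | h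
    · obtain ⟨e, -, rfl⟩ := Finset.mem_image.mp h
      exact ⟨⟨uu e.1, Finset.mem_insert_self _ _⟩, ⟨xx e 0, Finset.mem_singleton_self _⟩⟩
    · obtain ⟨j, -, rfl⟩ := Finset.mem_image.mp h
      refine ⟨⟨vv j, Finset.mem_singleton_self _⟩, ⟨xx (⟨0, hm⟩, j) 1, ?_⟩⟩
      exact Finset.mem_image_of_mem _ (Finset.mem_univ _)
  · intro x y
    constructor
    · intro hxy
      rcases hxy with (⟨f, ⟨hx, hy⟩ | ⟨hy, hx⟩⟩ | ⟨f, ⟨hx, hy⟩ | ⟨hy, hx⟩⟩ |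
        ⟨f, ⟨hx, hy⟩ | ⟨hy, hx⟩⟩)
      -- u/x0 edge
      · subst hx; subst hy
        refine ⟨_, Finset.mem_union_left _ (Finset.mem_image_of_mem _ (Finset.mem_univ f)),
          Or.inl ⟨Finset.mem_insert_self _ _, Finset.mem_singleton_self _⟩⟩
      · subst hx; subst hy
        refine ⟨_, Finset.mem_union_left _ (Finset.mem_image_of_mem _ (Finset.mem_univ f)),
          Or.inr ⟨Finset.mem_singleton_self _, Finset.mem_insert_self _ _⟩⟩
      -- mid edge
      · subst hx; subst hy
        refine ⟨_, Finset.mem_union_left _ (Finset.mem_image_of_mem _ (Finset.mem_univ f)),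
          Or.inr ⟨Finset.mem_singleton_self _,
            Finset.mem_insert.mpr (Or.inr (Finset.mem_singleton_self _))⟩⟩
      · subst hx; subst hy
        refine ⟨_, Finset.mem_union_left _ (Finset.mem_image_of_mem _ (Finset.mem_univ f)),
          Or.inl ⟨Finset.mem_insert.mpr (Or.inr (Finset.mem_singleton_self _)),
            Finset.mem_singleton_self _⟩⟩
      -- v/x1 edge
      · subst hx; subst hy
        refine ⟨_, Finset.mem_union_right _ (Finset.mem_image_of_mem _ (Finset.mem_univ f.2)),
          Or.inl ⟨Finset.mem_singleton_self _, ?_⟩⟩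
        have hfe : (xx f 1 : VT m n) = xx (f.1, f.2) 1 := by simp
        show (xx f 1 : VT m n) ∈ X1 m n f.2
        rw [hfe]
        exact Finset.mem_image_of_mem _ (Finset.mem_univ f.1)
      · subst hx; subst hy
        refine ⟨_, Finset.mem_union_right _ (Finset.mem_image_of_mem _ (Finset.mem_univ f.2)),
          Or.inr ⟨?_, Finset.mem_singleton_self _⟩⟩
        have hfe : (xx f 1 : VT m n) = xx (f.1, f.2) 1 := by simp
        show (xx f 1 : VT m n) ∈ X1 m n f.2
        rw [hfe]
        exact Finset.mem_image_of_mem _ (Finset.mem_univ f.1)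
    · rintro ⟨p, hp, h⟩
      rcases Finset.mem_union.mp hp with hp' | hp'
      · obtain ⟨e, -, rfl⟩ := Finset.mem_image.mp hp'
        simp only [Finset.mem_insert, Finset.mem_singleton] at h
        rcases h with ⟨hx | hx, hy⟩ | ⟨hx, hy | hy⟩
        · subst hx; subst hy; exact adj_u_x0 e
        · subst hx; subst hy; exact (subdivKmn m n).symm _ _ (adj_mid e)
        · subst hx; subst hy; exact (subdivKmn m n).symm _ _ (adj_u_x0 e)
        · subst hx; subst hy; exact adj_mid e
      · obtain ⟨j, -, rfl⟩ := Finset.mem_image.mp hp'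
        simp only [Finset.mem_singleton] at h
        rcases h with ⟨hx, hy⟩ | ⟨hx, hy⟩
        · subst hx
          obtain ⟨i, -, rfl⟩ := Finset.mem_image.mp hy
          exact adj_v_x1 (i, j)
        · subst hy
          obtain ⟨i, -, rfl⟩ := Finset.mem_image.mp hx
          exact (subdivKmn m n).symm _ _ (adj_v_x1 (i, j))

lemma card_C0 : (sjComponents (C0 m n)).card ≤ 2*m*n + 2*n := by
  have h1 : (sjComponents (C0 m n)).card ≤
      ((C0 m n).image Prod.fst).card + ((C0 m n).image Prod.snd).card :=
    Finset.card_union_le _ _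
  have h2 : ((C0 m n).image Prod.fst).card ≤ m*n + n := by
    unfold C0
    rw [Finset.image_union]
    refine le_trans (Finset.card_union_le _ _) ?_
    have a1 := Finset.card_image_le (s := (Finset.univ : Finset (Fin m × Fin n)).image
      (fun e => (({uu e.1, xx e 1} : Finset (VT m n)), ({xx e 0} : Finset (VT m n)))))
      (f := Prod.fst)
    have a2 := Finset.card_image_le (s := (Finset.univ : Finset (Fin m × Fin n)))
      (f := fun e : Fin m × Fin n =>
        (({uu e.1, xx e 1} : Finset (VT m n)), ({xx e 0} : Finset (VT m n))))
    have b1 := Finset.card_image_le (s := (Finset.univ : Finset (Fin n)).image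
      (fun j => (({vv j} : Finset (VT m n)), X1 m n j))) (f := Prod.fst)
    have b2 := Finset.card_image_le (s := (Finset.univ : Finset (Fin n)))
      (f := fun j : Fin n => (({vv j} : Finset (VT m n)), X1 m n j))
    simp only [Finset.card_univ, Fintype.card_prod, Fintype.card_fin] at a2 b2
    omega
  have h3 : ((C0 m n).image Prod.snd).card ≤ m*n + n := by
    unfold C0
    rw [Finset.image_union]
    refine le_trans (Finset.card_union_le _ _) ?_
    have a1 := Finset.card_image_le (s := (Finset.univ : Finset (Fin m × Fin n)).image
      (fun e => (({uu e.1, xx e 1} : Finset (VT m n)), ({xx e 0} : Finset (VT m n)))))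
      (f := Prod.snd)
    have a2 := Finset.card_image_le (s := (Finset.univ : Finset (Fin m × Fin n)))
      (f := fun e : Fin m × Fin n =>
        (({uu e.1, xx e 1} : Finset (VT m n)), ({xx e 0} : Finset (VT m n))))
    have b1 := Finset.card_image_le (s := (Finset.univ : Finset (Fin n)).image
      (fun j => (({vv j} : Finset (VT m n)), X1 m n j))) (f := Prod.snd)
    have b2 := Finset.card_image_le (s := (Finset.univ : Finset (Fin n)))
      (f := fun j : Fin n => (({vv j} : Finset (VT m n)), X1 m n j))
    simp only [Finset.card_univ, Fintype.card_prod, Fintype.card_fin] at a2 b2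
    omega
  have hr : 2*m*n = m*n + m*n := by ring
  omega

lemma stp_eq (hmn : n ≤ m) (hn : 1 ≤ n) : (subdivKmn m n).stp = 2*m*n + 2*n := by
  have hm : 1 ≤ m := le_trans hn hmn
  apply le_antisymm
  · exact le_trans (Nat.sInf_le ⟨C0 m n, isCover_C0 hm, rfl⟩) card_C0
  · refine le_csInf ⟨_, C0 m n, isCover_C0 hm, rfl⟩ ?_
    rintro k ⟨C, hC, rfl⟩
    exact lower hmn hn hC

end Stmt16

/-- The double subdivision of `K_{m,n}` (`m ≥ n ≥ 1`) has gap
`m - n`. -/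
theorem stmt_16 (m n : ℕ) (hmn : n ≤ m) (hn : 1 ≤ n) :
    (subdivKmn m n).gap = m - n := by
  unfold LoopGraph.gap
  rw [Stmt16.stp_eq hmn hn]
  have hc : Fintype.card ((Fin m ⊕ Fin n) ⊕ ((Fin m × Fin n) × Fin 2)) = m + n + m*n*2 := by
    simp
  rw [hc]
  have hr : m*n*2 = 2*m*n := by ring
  omega
end

section
/- Let Γ be a loopless multigraph with all edge weights 0 and let G = ζ(Γ) be the graph obtained by replacing every edge of Γ by a path with 2 internal vertices. Then for every subset S = {v_1, …, v_k} ⊆ V(Γ), gap(G) ≥ gap(ζ(Γ \ S)) − k. In particular, gap(G) ≥ 2α(Γ) − |V(Γ)|, where α(Γ) is the independence number of Γ. -/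
open LoopGraph

/-- The endpoint map of the multigraph obtained by removing the vertices in `S`
together with all edges incident to them. -/
def restrictEnds {V E : Type*} [DecidableEq V] (ends : E → V × V) (S : Finset V) :
    {e : E // (ends e).1 ∉ S ∧ (ends e).2 ∉ S} → {x : V // x ∉ S} × {x : V // x ∉ S} :=
  fun e => (⟨(ends e.1).1, e.2.1⟩, ⟨(ends e.1).2, e.2.2⟩)


section Basics
variable {W : Type*} [Fintype W] [DecidableEq W]

lemma exists_cover_s18 (G : LoopGraph W) : ∃ C, G.IsCover C := by
  classical
  refine ⟨(Finset.univ.filter (fun p : W × W => G.Adj p.1 p.2)).image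
      (fun p => ({p.1}, {p.2})), ?_, ?_⟩
  · intro p hp
    simp only [Finset.mem_image, Finset.mem_filter] at hp
    obtain ⟨q, _, rfl⟩ := hp
    exact ⟨Finset.singleton_nonempty _, Finset.singleton_nonempty _⟩
  · intro u v
    constructor
    · intro h
      exact ⟨({u}, {v}), by simp [h], Or.inl ⟨by simp, by simp⟩⟩
    · rintro ⟨p, hp, h⟩
      simp only [Finset.mem_image, Finset.mem_filter, Finset.mem_univ, true_and] at hp
      obtain ⟨q, hq, rfl⟩ := hp
      simp only [Finset.mem_singleton] at h
      rcases h with ⟨rfl, rfl⟩ | ⟨rfl, rfl⟩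
      · exact hq
      · exact G.symm _ _ hq

lemma stp_le_of_cover {G : LoopGraph W} {C} (h : G.IsCover C) :
    G.stp ≤ (sjComponents C).card :=
  Nat.sInf_le ⟨C, h, rfl⟩

lemma exists_optimal_cover (G : LoopGraph W) :
    ∃ C, G.IsCover C ∧ (sjComponents C).card = G.stp := by
  have hne : {n | ∃ C : Finset (Finset W × Finset W),
      G.IsCover C ∧ (sjComponents C).card = n}.Nonempty := by
    obtain ⟨C, hC⟩ := exists_cover_s18 G
    exact ⟨_, C, hC, rfl⟩
  exact Nat.sInf_mem hne

end Basics

section Main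
variable {V E : Type*} [Fintype V] [DecidableEq V] [Fintype E] [DecidableEq E]

def embMap (ends : E → V × V) (S : Finset V) :
    ({x : V // x ∉ S} ⊕ {e : E // (ends e).1 ∉ S ∧ (ends e).2 ∉ S} × Fin 2) → V ⊕ E × Fin 2
  | .inl x => .inl x.val
  | .inr (e, i) => .inr (e.val, i)

def HvSet (ends : E → V × V) (v : V) : Finset (V ⊕ E × Fin 2) :=
  ((Finset.univ.filter fun e : E => (ends e).1 = v).image fun e => Sum.inr (e, (0 : Fin 2)))
  ∪ ((Finset.univ.filter fun e : E => (ends e).2 = v).image fun e => Sum.inr (e, (1 : Fin 2)))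

def pairE (ends : E → V × V) (S : Finset V) (e : E) :
    Finset (V ⊕ E × Fin 2) × Finset (V ⊕ E × Fin 2) :=
  if (ends e).1 ∈ S then
    if (ends e).2 ∈ S then ({Sum.inr (e, 0)}, {Sum.inr (e, 1)})
    else ({Sum.inr (e, 1)}, {Sum.inr (e, 0), Sum.inl (ends e).2})
  else ({Sum.inr (e, 0)}, {Sum.inr (e, 1), Sum.inl (ends e).1})

lemma adj_lift (ends : E → V × V) (S : Finset V) (a b) :
    (zeta (restrictEnds ends S)).Adj a b →
    (zeta ends).Adj (embMap ends S a) (embMap ends S b) := by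
  rintro (⟨e, ⟨rfl, rfl⟩ | ⟨rfl, rfl⟩⟩ | ⟨e, ⟨rfl, rfl⟩ | ⟨rfl, rfl⟩⟩ |
    ⟨e, ⟨rfl, rfl⟩ | ⟨rfl, rfl⟩⟩)
  · exact Or.inl ⟨e.1, Or.inl ⟨rfl, rfl⟩⟩
  · exact Or.inl ⟨e.1, Or.inr ⟨rfl, rfl⟩⟩
  · exact Or.inr (Or.inl ⟨e.1, Or.inl ⟨rfl, rfl⟩⟩)
  · exact Or.inr (Or.inl ⟨e.1, Or.inr ⟨rfl, rfl⟩⟩)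
  · exact Or.inr (Or.inr ⟨e.1, Or.inl ⟨rfl, rfl⟩⟩)
  · exact Or.inr (Or.inr ⟨e.1, Or.inr ⟨rfl, rfl⟩⟩)

lemma construct (ends : E → V × V) (S : Finset V)
    (C' : Finset (Finset ({x : V // x ∉ S} ⊕ {e : E // (ends e).1 ∉ S ∧ (ends e).2 ∉ S} × Fin 2)
      × Finset ({x : V // x ∉ S} ⊕ {e : E // (ends e).1 ∉ S ∧ (ends e).2 ∉ S} × Fin 2)))
    (hC' : (zeta (restrictEnds ends S)).IsCover C') :
    ∃ C, (zeta ends).IsCover C ∧ (sjComponents C).card ≤ (sjComponents C').card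
      + 2 * (Finset.univ.filter fun e : E =>
          ¬((ends e).1 ∉ S ∧ (ends e).2 ∉ S)).card
      + 2 * S.card := by
  classical
  set emb := embMap ends S with hemb
  set removed := Finset.univ.filter fun e : E => ¬((ends e).1 ∉ S ∧ (ends e).2 ∉ S) with hrm
  set Sg := S.filter (fun v => (HvSet ends v).Nonempty) with hSg
  set C₀ := C'.image (fun p => (p.1.image emb, p.2.image emb)) with hC₀
  set Ce := removed.image (pairE ends S) with hCe
  set Cv := Sg.image (fun v => (({Sum.inl v} : Finset (V ⊕ E × Fin 2)), HvSet ends v)) with hCv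
  refine ⟨(C₀ ∪ Ce) ∪ Cv, ⟨?_, ?_⟩, ?_⟩
  · -- nonemptiness of parts
    intro p hp
    simp only [Finset.mem_union] at hp
    rcases hp with (hp | hp) | hp
    · simp only [hC₀, Finset.mem_image] at hp
      obtain ⟨q, hq, rfl⟩ := hp
      obtain ⟨h1, h2⟩ := hC'.1 q hq
      exact ⟨h1.image _, h2.image _⟩
    · simp only [hCe, Finset.mem_image] at hp
      obtain ⟨e, _, rfl⟩ := hp
      unfold pairE
      split_ifs <;>
        exact ⟨by simp [Finset.insert_nonempty, Finset.singleton_nonempty],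
               by simp [Finset.insert_nonempty, Finset.singleton_nonempty]⟩
    · simp only [hCv, Finset.mem_image, hSg, Finset.mem_filter] at hp
      obtain ⟨v, ⟨_, hv⟩, rfl⟩ := hp
      exact ⟨Finset.singleton_nonempty _, hv⟩
  · -- adjacency iff
    have hmem₀ : ∀ q ∈ C', (q.1.image emb, q.2.image emb) ∈ (C₀ ∪ Ce) ∪ Cv := by
      intro q hq
      exact Finset.mem_union_left _ (Finset.mem_union_left _
        (Finset.mem_image_of_mem _ hq))
    have hmemE : ∀ e : E, ¬((ends e).1 ∉ S ∧ (ends e).2 ∉ S) →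
        pairE ends S e ∈ (C₀ ∪ Ce) ∪ Cv := by
      intro e he
      exact Finset.mem_union_left _ (Finset.mem_union_right _
        (Finset.mem_image_of_mem _ (Finset.mem_filter.2 ⟨Finset.mem_univ e, he⟩)))
    have hmemV : ∀ v ∈ S, (HvSet ends v).Nonempty →
        (({Sum.inl v} : Finset (V ⊕ E × Fin 2)), HvSet ends v) ∈ (C₀ ∪ Ce) ∪ Cv := by
      intro v hv hne
      exact Finset.mem_union_right _
        (Finset.mem_image_of_mem _ (Finset.mem_filter.2 ⟨hv, hne⟩))
    have hlift : ∀ a b, (zeta (restrictEnds ends S)).Adj a b →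
        ∃ p ∈ (C₀ ∪ Ce) ∪ Cv,
          (emb a ∈ p.1 ∧ emb b ∈ p.2) ∨ (emb a ∈ p.2 ∧ emb b ∈ p.1) := by
      intro a b hab
      obtain ⟨q, hq, h⟩ := (hC'.2 a b).1 hab
      refine ⟨(q.1.image emb, q.2.image emb), hmem₀ q hq, ?_⟩
      rcases h with ⟨h1, h2⟩ | ⟨h1, h2⟩
      · exact Or.inl ⟨Finset.mem_image_of_mem _ h1, Finset.mem_image_of_mem _ h2⟩
      · exact Or.inr ⟨Finset.mem_image_of_mem _ h1, Finset.mem_image_of_mem _ h2⟩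
    have hmemHv0 : ∀ e : E, Sum.inr (e, (0 : Fin 2)) ∈ HvSet ends (ends e).1 := by
      intro e
      exact Finset.mem_union_left _ (Finset.mem_image_of_mem _ (by simp))
    have hmemHv1 : ∀ e : E, Sum.inr (e, (1 : Fin 2)) ∈ HvSet ends (ends e).2 := by
      intro e
      exact Finset.mem_union_right _ (Finset.mem_image_of_mem _ (by simp))
    -- coverage of the three edge types
    have cov1 : ∀ e : E, ∃ p ∈ (C₀ ∪ Ce) ∪ Cv,
        ((Sum.inl (ends e).1 : V ⊕ E × Fin 2) ∈ p.1 ∧ Sum.inr (e, (0 : Fin 2)) ∈ p.2) ∨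
        ((Sum.inl (ends e).1 : V ⊕ E × Fin 2) ∈ p.2 ∧ Sum.inr (e, (0 : Fin 2)) ∈ p.1) := by
      intro e
      by_cases h1 : (ends e).1 ∈ S
      · refine ⟨_, hmemV (ends e).1 h1 ⟨_, hmemHv0 e⟩, Or.inl ⟨?_, hmemHv0 e⟩⟩
        simp
      · by_cases h2 : (ends e).2 ∈ S
        · refine ⟨pairE ends S e, hmemE e (by tauto), ?_⟩
          rw [pairE, if_neg h1]
          exact Or.inr ⟨by simp, by simp⟩
        · exact hlift (Sum.inl ⟨(ends e).1, h1⟩) (Sum.inr (⟨e, h1, h2⟩, 0))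
            (Or.inl ⟨⟨e, h1, h2⟩, Or.inl ⟨rfl, rfl⟩⟩)
    have cov2 : ∀ e : E, ∃ p ∈ (C₀ ∪ Ce) ∪ Cv,
        ((Sum.inr (e, (0 : Fin 2)) : V ⊕ E × Fin 2) ∈ p.1 ∧ Sum.inr (e, (1 : Fin 2)) ∈ p.2) ∨
        ((Sum.inr (e, (0 : Fin 2)) : V ⊕ E × Fin 2) ∈ p.2 ∧ Sum.inr (e, (1 : Fin 2)) ∈ p.1) := by
      intro e
      by_cases h1 : (ends e).1 ∈ S
      · by_cases h2 : (ends e).2 ∈ S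
        · refine ⟨pairE ends S e, hmemE e (by tauto), ?_⟩
          rw [pairE, if_pos h1, if_pos h2]
          exact Or.inl ⟨by simp, by simp⟩
        · refine ⟨pairE ends S e, hmemE e (by tauto), ?_⟩
          rw [pairE, if_pos h1, if_neg h2]
          exact Or.inr ⟨by simp, by simp⟩
      · by_cases h2 : (ends e).2 ∈ S
        · refine ⟨pairE ends S e, hmemE e (by tauto), ?_⟩
          rw [pairE, if_neg h1]
          exact Or.inl ⟨by simp, by simp⟩
        · exact hlift (Sum.inr (⟨e, h1, h2⟩, 0)) (Sum.inr (⟨e, h1, h2⟩, 1))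
            (Or.inr (Or.inl ⟨⟨e, h1, h2⟩, Or.inl ⟨rfl, rfl⟩⟩))
    have cov3 : ∀ e : E, ∃ p ∈ (C₀ ∪ Ce) ∪ Cv,
        ((Sum.inl (ends e).2 : V ⊕ E × Fin 2) ∈ p.1 ∧ Sum.inr (e, (1 : Fin 2)) ∈ p.2) ∨
        ((Sum.inl (ends e).2 : V ⊕ E × Fin 2) ∈ p.2 ∧ Sum.inr (e, (1 : Fin 2)) ∈ p.1) := by
      intro e
      by_cases h2 : (ends e).2 ∈ S
      · refine ⟨_, hmemV (ends e).2 h2 ⟨_, hmemHv1 e⟩, Or.inl ⟨?_, hmemHv1 e⟩⟩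
        simp
      · by_cases h1 : (ends e).1 ∈ S
        · refine ⟨pairE ends S e, hmemE e (by tauto), ?_⟩
          rw [pairE, if_pos h1, if_neg h2]
          exact Or.inr ⟨by simp, by simp⟩
        · exact hlift (Sum.inl ⟨(ends e).2, h2⟩) (Sum.inr (⟨e, h1, h2⟩, 1))
            (Or.inr (Or.inr ⟨⟨e, h1, h2⟩, Or.inl ⟨rfl, rfl⟩⟩))
    have swapg : ∀ u v : V ⊕ E × Fin 2,
        (∃ p ∈ (C₀ ∪ Ce) ∪ Cv, (u ∈ p.1 ∧ v ∈ p.2) ∨ (u ∈ p.2 ∧ v ∈ p.1)) →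
        (∃ p ∈ (C₀ ∪ Ce) ∪ Cv, (v ∈ p.1 ∧ u ∈ p.2) ∨ (v ∈ p.2 ∧ u ∈ p.1)) := by
      rintro u v ⟨p, hp, ⟨h1, h2⟩ | ⟨h1, h2⟩⟩
      · exact ⟨p, hp, Or.inr ⟨h2, h1⟩⟩
      · exact ⟨p, hp, Or.inl ⟨h2, h1⟩⟩
    intro u v
    constructor
    · rintro (⟨e, ⟨rfl, rfl⟩ | ⟨rfl, rfl⟩⟩ | ⟨e, ⟨rfl, rfl⟩ | ⟨rfl, rfl⟩⟩ |
        ⟨e, ⟨rfl, rfl⟩ | ⟨rfl, rfl⟩⟩)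
      · exact cov1 e
      · exact swapg _ _ (cov1 e)
      · exact cov2 e
      · exact swapg _ _ (cov2 e)
      · exact cov3 e
      · exact swapg _ _ (cov3 e)
    · rintro ⟨p, hp, h⟩
      simp only [Finset.mem_union] at hp
      rcases hp with (hp | hp) | hp
      · -- mapped pair
        simp only [hC₀, Finset.mem_image] at hp
        obtain ⟨q, hq, rfl⟩ := hp
        rcases h with ⟨h1, h2⟩ | ⟨h1, h2⟩
        · simp only [Finset.mem_image] at h1 h2
          obtain ⟨a, ha, rfl⟩ := h1
          obtain ⟨b, hb, rfl⟩ := h2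
          exact adj_lift ends S a b ((hC'.2 a b).2 ⟨q, hq, Or.inl ⟨ha, hb⟩⟩)
        · simp only [Finset.mem_image] at h1 h2
          obtain ⟨a, ha, rfl⟩ := h1
          obtain ⟨b, hb, rfl⟩ := h2
          exact adj_lift ends S a b ((hC'.2 a b).2 ⟨q, hq, Or.inr ⟨ha, hb⟩⟩)
      · -- pairE
        simp only [hCe, Finset.mem_image] at hp
        obtain ⟨e, _, rfl⟩ := hp
        unfold pairE at h
        split_ifs at h
        · simp only [Finset.mem_singleton] at h
          rcases h with ⟨rfl, rfl⟩ | ⟨rfl, rfl⟩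
          · exact Or.inr (Or.inl ⟨e, Or.inl ⟨rfl, rfl⟩⟩)
          · exact Or.inr (Or.inl ⟨e, Or.inr ⟨rfl, rfl⟩⟩)
        · simp only [Finset.mem_singleton, Finset.mem_insert] at h
          rcases h with ⟨rfl, rfl | rfl⟩ | ⟨rfl | rfl, rfl⟩
          · exact Or.inr (Or.inl ⟨e, Or.inr ⟨rfl, rfl⟩⟩)
          · exact Or.inr (Or.inr ⟨e, Or.inr ⟨rfl, rfl⟩⟩)
          · exact Or.inr (Or.inl ⟨e, Or.inl ⟨rfl, rfl⟩⟩)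
          · exact Or.inr (Or.inr ⟨e, Or.inl ⟨rfl, rfl⟩⟩)
        · simp only [Finset.mem_singleton, Finset.mem_insert] at h
          rcases h with ⟨rfl, rfl | rfl⟩ | ⟨rfl | rfl, rfl⟩
          · exact Or.inr (Or.inl ⟨e, Or.inl ⟨rfl, rfl⟩⟩)
          · exact Or.inl ⟨e, Or.inr ⟨rfl, rfl⟩⟩
          · exact Or.inr (Or.inl ⟨e, Or.inr ⟨rfl, rfl⟩⟩)
          · exact Or.inl ⟨e, Or.inl ⟨rfl, rfl⟩⟩
      · -- pairV
        simp only [hCv, Finset.mem_image] at hp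
        obtain ⟨w, _, rfl⟩ := hp
        have hHv : ∀ x, x ∈ HvSet ends w →
            ((∃ e : E, (ends e).1 = w ∧ x = Sum.inr (e, (0 : Fin 2))) ∨
             (∃ e : E, (ends e).2 = w ∧ x = Sum.inr (e, (1 : Fin 2)))) := by
          intro x hx
          simp only [HvSet, Finset.mem_union, Finset.mem_image, Finset.mem_filter,
            Finset.mem_univ, true_and] at hx
          rcases hx with ⟨e, he, rfl⟩ | ⟨e, he, rfl⟩
          · exact Or.inl ⟨e, he, rfl⟩
          · exact Or.inr ⟨e, he, rfl⟩
        rcases h with ⟨h1, h2⟩ | ⟨h1, h2⟩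
        · simp only [Finset.mem_singleton] at h1
          subst h1
          rcases hHv v h2 with ⟨e, he, rfl⟩ | ⟨e, he, rfl⟩
          · exact Or.inl ⟨e, Or.inl ⟨by rw [he], rfl⟩⟩
          · exact Or.inr (Or.inr ⟨e, Or.inl ⟨by rw [he], rfl⟩⟩)
        · simp only [Finset.mem_singleton] at h2
          subst h2
          rcases hHv u h1 with ⟨e, he, rfl⟩ | ⟨e, he, rfl⟩
          · exact Or.inl ⟨e, Or.inr ⟨by rw [he], rfl⟩⟩
          · exact Or.inr (Or.inr ⟨e, Or.inr ⟨by rw [he], rfl⟩⟩)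
  · -- cardinality bound
    have hu : sjComponents ((C₀ ∪ Ce) ∪ Cv) =
        (sjComponents C₀ ∪ sjComponents Ce) ∪ sjComponents Cv := by
      simp only [sjComponents, Finset.image_union]
      ac_rfl
    have h₀ : (sjComponents C₀).card ≤ (sjComponents C').card := by
      have : sjComponents C₀ = (sjComponents C').image (Finset.image emb) := by
        simp only [sjComponents, hC₀, Finset.image_image, Finset.image_union]
        rfl
      rw [this]
      exact Finset.card_image_le
    have hE' : (sjComponents Ce).card ≤ 2 * removed.card := by
      have := Finset.card_union_le (Ce.image Prod.fst) (Ce.image Prod.snd)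
      have h1 : (Ce.image Prod.fst).card ≤ removed.card := by
        rw [hCe, Finset.image_image]; exact Finset.card_image_le
      have h2 : (Ce.image Prod.snd).card ≤ removed.card := by
        rw [hCe, Finset.image_image]; exact Finset.card_image_le
      calc (sjComponents Ce).card ≤ _ := this
        _ ≤ 2 * removed.card := by omega
    have hV' : (sjComponents Cv).card ≤ 2 * S.card := by
      have := Finset.card_union_le (Cv.image Prod.fst) (Cv.image Prod.snd)
      have hSgS : Sg.card ≤ S.card := Finset.card_le_card (Finset.filter_subset _ _)
      have h1 : (Cv.image Prod.fst).card ≤ Sg.card := by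
        rw [hCv, Finset.image_image]; exact Finset.card_image_le
      have h2 : (Cv.image Prod.snd).card ≤ Sg.card := by
        rw [hCv, Finset.image_image]; exact Finset.card_image_le
      calc (sjComponents Cv).card ≤ _ := this
        _ ≤ 2 * S.card := by omega
    calc (sjComponents ((C₀ ∪ Ce) ∪ Cv)).card
        ≤ (sjComponents C₀ ∪ sjComponents Ce).card + (sjComponents Cv).card := by
          rw [hu]; exact Finset.card_union_le _ _
      _ ≤ (sjComponents C₀).card + (sjComponents Ce).card + (sjComponents Cv).card := by
          have := Finset.card_union_le (sjComponents C₀) (sjComponents Ce)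
          omega
      _ ≤ (sjComponents C').card + 2 * removed.card + 2 * S.card := by omega

end Main

/-- Let `Γ` be a loopless multigraph (edge set `E`, endpoint map
`ends`) and `G = ζ(Γ)` its double subdivision. Then for every `S ⊆ V(Γ)` of
size `k`, `gap G ≥ gap (ζ(Γ \ S)) − k`, and in particular for every independent
set `S` of `Γ`, `gap G ≥ 2|S| − |V(Γ)|` (both stated subtraction-free). -/
theorem stmt_18 {V E : Type*} [Fintype V] [DecidableEq V] [Fintype E] [DecidableEq E]
    (ends : E → V × V) (hloopless : ∀ e : E, (ends e).1 ≠ (ends e).2) :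
    (∀ S : Finset V,
      (zeta (restrictEnds ends S)).gap ≤ (zeta ends).gap + S.card) ∧
    (∀ S : Finset V, (∀ e : E, ¬((ends e).1 ∈ S ∧ (ends e).2 ∈ S)) →
      2 * S.card ≤ (zeta ends).gap + Fintype.card V) := by
  classical
  have part1 : ∀ S : Finset V,
      (zeta (restrictEnds ends S)).gap ≤ (zeta ends).gap + S.card := by
    intro S
    obtain ⟨C', hC', hcard⟩ := exists_optimal_cover (zeta (restrictEnds ends S))
    obtain ⟨C, hC, hle⟩ := construct ends S C' hC'
    rw [hcard] at hle
    have hstp : (zeta ends).stp ≤ (zeta (restrictEnds ends S)).stp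
        + 2 * (Finset.univ.filter fun e : E => ¬((ends e).1 ∉ S ∧ (ends e).2 ∉ S)).card
        + 2 * S.card := le_trans (stp_le_of_cover hC) hle
    have hkept : Fintype.card {e : E // (ends e).1 ∉ S ∧ (ends e).2 ∉ S}
        + (Finset.univ.filter fun e : E => ¬((ends e).1 ∉ S ∧ (ends e).2 ∉ S)).card
        = Fintype.card E := by
      rw [Fintype.card_subtype]
      exact Finset.card_filter_add_card_filter_not _
    have hVS : Fintype.card {x : V // x ∉ S} + S.card = Fintype.card V := by
      rw [Fintype.card_subtype]
      have h := Finset.card_filter_add_card_filter_not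
        (s := (Finset.univ : Finset V)) (p := fun x : V => x ∉ S)
      have h2 : Finset.univ.filter (fun x : V => ¬ x ∉ S) = S := by
        ext x; simp
      rw [h2] at h
      simpa using h
    have h1 : Fintype.card (V ⊕ E × Fin 2) = Fintype.card V + 2 * Fintype.card E := by
      rw [Fintype.card_sum, Fintype.card_prod, Fintype.card_fin]; ring
    have h2 : Fintype.card ({x : V // x ∉ S}
          ⊕ {e : E // (ends e).1 ∉ S ∧ (ends e).2 ∉ S} × Fin 2)
        = Fintype.card {x : V // x ∉ S}
          + 2 * Fintype.card {e : E // (ends e).1 ∉ S ∧ (ends e).2 ∉ S} := by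
      rw [Fintype.card_sum, Fintype.card_prod, Fintype.card_fin]; ring
    unfold LoopGraph.gap
    rw [h1, h2]
    omega
  refine ⟨part1, ?_⟩
  intro S hind
  have h1 := part1 Sᶜ
  have hE : IsEmpty {e : E // (ends e).1 ∉ Sᶜ ∧ (ends e).2 ∉ Sᶜ} := by
    constructor
    rintro ⟨e, he1, he2⟩
    simp only [Finset.mem_compl, not_not] at he1 he2
    exact hind e ⟨he1, he2⟩
  have hstp0 : (zeta (restrictEnds ends Sᶜ)).stp = 0 := by
    have hcov : (zeta (restrictEnds ends Sᶜ)).IsCover ∅ := by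
      constructor
      · intro p hp; exact absurd hp (Finset.notMem_empty p)
      · intro u v
        constructor
        · rintro (⟨e, _⟩ | ⟨e, _⟩ | ⟨e, _⟩) <;> exact (hE.false e).elim
        · rintro ⟨p, hp, _⟩; exact absurd hp (Finset.notMem_empty p)
    have := stp_le_of_cover hcov
    simp only [sjComponents, Finset.image_empty, Finset.union_empty,
      Finset.card_empty] at this
    omega
  have hcard2 : Fintype.card ({x : V // x ∉ Sᶜ}
      ⊕ {e : E // (ends e).1 ∉ Sᶜ ∧ (ends e).2 ∉ Sᶜ} × Fin 2) = S.card := by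
    rw [Fintype.card_sum]
    have e1 : Fintype.card {x : V // x ∉ Sᶜ} = S.card := by
      have hiff : ∀ x : V, x ∉ Sᶜ ↔ x ∈ S := by intro x; simp
      calc Fintype.card {x : V // x ∉ Sᶜ}
          = Fintype.card {x : V // x ∈ S} :=
            Fintype.card_congr (Equiv.subtypeEquivRight hiff)
        _ = S.card := Fintype.card_coe S
    haveI := hE
    have e2 : Fintype.card ({e : E // (ends e).1 ∉ Sᶜ ∧ (ends e).2 ∉ Sᶜ} × Fin 2) = 0 :=
      Fintype.card_eq_zero
    omega
  have hgap : (zeta (restrictEnds ends Sᶜ)).gap = S.card := by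
    unfold LoopGraph.gap
    rw [hstp0, Nat.sub_zero, hcard2]
  rw [hgap] at h1
  have hcompl : Sᶜ.card = Fintype.card V - S.card := Finset.card_compl S
  have hle2 : S.card ≤ Fintype.card V := Finset.card_le_univ S
  omega
end
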